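/- arXiv:1404.0948 — 5 statements merged into one kernel-verified Lean document; each statement's English description precedes it below -/
import Mathlib

section
/- Let n ≥ 2 and let π be a permutation of {1,…,n} such that π(F_n) = F_n (π maps the set of channel pairs of F_n to itself) and let L be a layer on n channels such that π(L) = {(π(i),π(j)) : (i,j) ∈ L} is again a layer (i.e., π(i) < π(j) for every comparator (i,j) of L). If there exists a comparator network C such that F_n;L;C is a sorting network of depth d, then there exists a comparator network C' such that F_n;π(L);C' is a sorting network of depth d. -/
/-- A layer: a set of comparators `(i,j)` with `i < j`, each channel in at most one comparator. -/
def IsLayer {n : ℕ} (L : Finset (Fin n × Fin n)) : Prop :=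
  (∀ c ∈ L, c.1 < c.2) ∧
  (∀ c ∈ L, ∀ c' ∈ L, c ≠ c' →
    c.1 ≠ c'.1 ∧ c.1 ≠ c'.2 ∧ c.2 ≠ c'.1 ∧ c.2 ≠ c'.2)

/-- Apply one layer to a binary vector: the first channel of a comparator receives the
minimum (`&&`), the second the maximum (`||`). -/
noncomputable def applyLayer {n : ℕ} (L : Finset (Fin n × Fin n)) (x : Fin n → Bool) :
    Fin n → Bool := fun k =>
  if h : ∃ j, (k, j) ∈ L then x k && x h.choose
  else if h' : ∃ i, (i, k) ∈ L then x h'.choose || x k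
  else x k

/-- Propagate a binary input through the layers of a network (a list of layers). -/
noncomputable def applyNet {n : ℕ} (N : List (Finset (Fin n × Fin n))) (x : Fin n → Bool) :
    Fin n → Bool :=
  N.foldl (fun v L => applyLayer L v) x

/-- The set of binary outputs of a network. -/
noncomputable def outputs {n : ℕ} (N : List (Finset (Fin n × Fin n))) : Set (Fin n → Bool) :=
  Set.range (applyNet N)

/-- A network sorts all binary inputs. -/
def Sorts {n : ℕ} (N : List (Finset (Fin n × Fin n))) : Prop :=
  ∀ x : Fin n → Bool, Monotone (applyNet N x)

/-- The first layer `F_n`: comparators `(2k-1, 2k)` (0-indexed: `(2k, 2k+1)`). -/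
def Fn (n : ℕ) : Finset (Fin n × Fin n) :=
  Finset.univ.filter (fun c => c.1.val % 2 = 0 ∧ c.2.val = c.1.val + 1)

/- ## Auxiliary development -/

/-- A generalized layer: channels distinct within and across comparators, no order requirement. -/
def IsGLayer {n : ℕ} (L : Finset (Fin n × Fin n)) : Prop :=
  (∀ c ∈ L, c.1 ≠ c.2) ∧
  (∀ c ∈ L, ∀ c' ∈ L, c ≠ c' →
    c.1 ≠ c'.1 ∧ c.1 ≠ c'.2 ∧ c.2 ≠ c'.1 ∧ c.2 ≠ c'.2)

lemma IsLayer.g {n : ℕ} {L : Finset (Fin n × Fin n)} (h : IsLayer L) : IsGLayer L :=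
  ⟨fun c hc => ne_of_lt (h.1 c hc), h.2⟩

namespace AuxSN

variable {n : ℕ}

lemma unique_fst {g : Finset (Fin n × Fin n)} (hg : IsGLayer g) {k j j' : Fin n}
    (h1 : (k, j) ∈ g) (h2 : (k, j') ∈ g) : j = j' := by
  by_contra hne
  have hneq : ((k, j) : Fin n × Fin n) ≠ (k, j') := by simp [hne]
  exact (hg.2 _ h1 _ h2 hneq).1 rfl

lemma unique_snd {g : Finset (Fin n × Fin n)} (hg : IsGLayer g) {k i i' : Fin n}
    (h1 : (i, k) ∈ g) (h2 : (i', k) ∈ g) : i = i' := by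
  by_contra hne
  have hneq : ((i, k) : Fin n × Fin n) ≠ (i', k) := by simp [hne]
  exact (hg.2 _ h1 _ h2 hneq).2.2.2 rfl

lemma not_both {g : Finset (Fin n × Fin n)} (hg : IsGLayer g) {k j i : Fin n}
    (h1 : (k, j) ∈ g) (h2 : (i, k) ∈ g) : False := by
  by_cases he : ((k, j) : Fin n × Fin n) = (i, k)
  · have : k = j := by
      have h1' := he ▸ h1
      obtain ⟨hi, hj⟩ := Prod.mk.injEq .. ▸ he
      exact (hj ▸ (hg.1 _ h1)) rfl |>.elim
    exact (hg.1 _ h1) this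
  · exact (hg.2 _ h1 _ h2 he).2.1 rfl

lemma applyLayer_min {g : Finset (Fin n × Fin n)} (hg : IsGLayer g) {k j : Fin n}
    (h : (k, j) ∈ g) (x : Fin n → Bool) : applyLayer g x k = (x k && x j) := by
  have he : ∃ j', (k, j') ∈ g := ⟨j, h⟩
  unfold applyLayer
  rw [dif_pos he, unique_fst hg he.choose_spec h]

lemma applyLayer_max {g : Finset (Fin n × Fin n)} (hg : IsGLayer g) {k i : Fin n}
    (h : (i, k) ∈ g) (x : Fin n → Bool) : applyLayer g x k = (x i || x k) := by
  have hne : ¬∃ j', (k, j') ∈ g := by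
    rintro ⟨j', hj'⟩; exact not_both hg hj' h
  have he : ∃ i', (i', k) ∈ g := ⟨i, h⟩
  unfold applyLayer
  rw [dif_neg hne, dif_pos he, unique_snd hg he.choose_spec h]

lemma applyLayer_none {g : Finset (Fin n × Fin n)} {k : Fin n}
    (h1 : ∀ j, (k, j) ∉ g) (h2 : ∀ i, (i, k) ∉ g) (x : Fin n → Bool) :
    applyLayer g x k = x k := by
  unfold applyLayer
  rw [dif_neg (by rintro ⟨j, hj⟩; exact h1 j hj), dif_neg (by rintro ⟨i, hi⟩; exact h2 i hi)]

/-- Image of a layer under a permutation of the channels. -/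
def pmap (σ : Equiv.Perm (Fin n)) (g : Finset (Fin n × Fin n)) : Finset (Fin n × Fin n) :=
  g.image (fun c => (σ c.1, σ c.2))

lemma mem_pmap {σ : Equiv.Perm (Fin n)} {g : Finset (Fin n × Fin n)} {a b : Fin n} :
    (σ a, σ b) ∈ pmap σ g ↔ (a, b) ∈ g := by
  constructor
  · rintro hm
    obtain ⟨c, hc, hce⟩ := Finset.mem_image.1 hm
    obtain ⟨h1, h2⟩ := Prod.mk.injEq .. ▸ hce
    rwa [← σ.injective h1, ← σ.injective h2]
  · intro hm
    exact Finset.mem_image.2 ⟨(a, b), hm, rfl⟩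

lemma mem_pmap' {σ : Equiv.Perm (Fin n)} {g : Finset (Fin n × Fin n)} {a b : Fin n}
    (h : (a, b) ∈ pmap σ g) : ∃ a' b', (a', b') ∈ g ∧ a = σ a' ∧ b = σ b' := by
  obtain ⟨c, hc, hce⟩ := Finset.mem_image.1 h
  obtain ⟨h1, h2⟩ := Prod.mk.injEq .. ▸ hce
  exact ⟨c.1, c.2, hc, h1.symm, h2.symm⟩

lemma pmap_glayer {σ : Equiv.Perm (Fin n)} {g : Finset (Fin n × Fin n)} (hg : IsGLayer g) :
    IsGLayer (pmap σ g) := by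
  constructor
  · rintro ⟨a, b⟩ hc
    obtain ⟨a', b', hm, rfl, rfl⟩ := mem_pmap' hc
    exact fun h => hg.1 _ hm (σ.injective h)
  · rintro ⟨a, b⟩ hc ⟨a', b'⟩ hc' hne
    obtain ⟨a1, b1, hm1, rfl, rfl⟩ := mem_pmap' hc
    obtain ⟨a2, b2, hm2, rfl, rfl⟩ := mem_pmap' hc'
    have hne' : ((a1, b1) : Fin n × Fin n) ≠ (a2, b2) := by
      intro heq
      exact hne (congrArg (fun c : Fin n × Fin n => (σ c.1, σ c.2)) heq)
    obtain ⟨d1, d2, d3, d4⟩ := hg.2 _ hm1 _ hm2 hne'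
    exact ⟨fun h => d1 (σ.injective h), fun h => d2 (σ.injective h),
      fun h => d3 (σ.injective h), fun h => d4 (σ.injective h)⟩

lemma applyLayer_pmap {σ : Equiv.Perm (Fin n)} {g : Finset (Fin n × Fin n)}
    (hg : IsGLayer g) (x : Fin n → Bool) (k : Fin n) :
    applyLayer (pmap σ g) x (σ k) = applyLayer g (fun m => x (σ m)) k := by
  by_cases h1 : ∃ j, (k, j) ∈ g
  · obtain ⟨j, hj⟩ := h1
    rw [applyLayer_min (pmap_glayer hg) (mem_pmap.2 hj) x, applyLayer_min hg hj]
  · by_cases h2 : ∃ i, (i, k) ∈ g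
    · obtain ⟨i, hi⟩ := h2
      rw [applyLayer_max (pmap_glayer hg) (mem_pmap.2 hi) x, applyLayer_max hg hi]
    · push_neg at h1 h2
      rw [applyLayer_none (g := g) h1 h2]
      refine applyLayer_none ?_ ?_ x
      · intro b hb
        obtain ⟨a', b', hm, ha, hb'⟩ := mem_pmap' hb
        exact h1 b' (σ.injective ha ▸ hm)
      · intro a ha
        obtain ⟨a', b', hm, ha', hb'⟩ := mem_pmap' ha
        exact h2 a' (σ.injective hb' ▸ hm)

@[simp] lemma applyNet_nil (x : Fin n → Bool) : applyNet [] x = x := rfl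

lemma applyNet_cons (l : Finset (Fin n × Fin n)) (N : List (Finset (Fin n × Fin n)))
    (x : Fin n → Bool) : applyNet (l :: N) x = applyNet N (applyLayer l x) := rfl

lemma applyNet_append (A B : List (Finset (Fin n × Fin n))) (x : Fin n → Bool) :
    applyNet (A ++ B) x = applyNet B (applyNet A x) := by
  unfold applyNet; rw [List.foldl_append]

/-- Image of a network under a permutation. -/
def gmap (σ : Equiv.Perm (Fin n)) (N : List (Finset (Fin n × Fin n))) :
    List (Finset (Fin n × Fin n)) := N.map (pmap σ)

lemma applyNet_gmap {σ : Equiv.Perm (Fin n)} :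
    ∀ (N : List (Finset (Fin n × Fin n))), (∀ g ∈ N, IsGLayer g) → ∀ (x : Fin n → Bool),
    (fun k => applyNet (gmap σ N) x (σ k)) = applyNet N (fun k => x (σ k)) := by
  intro N
  induction N with
  | nil => intro _ x; rfl
  | cons g N ih =>
    intro hN x
    have hg : IsGLayer g := hN g (by simp)
    have hstep : (fun k => applyLayer (pmap σ g) x (σ k)) = applyLayer g (fun k => x (σ k)) :=
      funext fun k => applyLayer_pmap hg x k
    show (fun k => applyNet (gmap σ N) (applyLayer (pmap σ g) x) (σ k)) = _
    rw [ih (fun l hl => hN l (by simp [hl])) (applyLayer (pmap σ g) x), hstep]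
    rfl

/- ## Untangling a single generalized layer -/

/-- The involution swapping the endpoints of every reversed comparator of `g`. -/
noncomputable def tauFun (g : Finset (Fin n × Fin n)) : Fin n → Fin n := fun k =>
  if h : ∃ j, (k, j) ∈ g ∧ j < k then h.choose
  else if h' : ∃ i, (i, k) ∈ g ∧ k < i then h'.choose
  else k

lemma tauFun_fst {g : Finset (Fin n × Fin n)} (hg : IsGLayer g) {k j : Fin n}
    (h : (k, j) ∈ g) (hlt : j < k) : tauFun g k = j := by
  have he : ∃ j', (k, j') ∈ g ∧ j' < k := ⟨j, h, hlt⟩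
  unfold tauFun
  rw [dif_pos he, unique_fst hg he.choose_spec.1 h]

lemma tauFun_snd {g : Finset (Fin n × Fin n)} (hg : IsGLayer g) {k i : Fin n}
    (h : (i, k) ∈ g) (hlt : k < i) : tauFun g k = i := by
  have hne : ¬∃ j', (k, j') ∈ g ∧ j' < k := by
    rintro ⟨j', hj', _⟩; exact not_both hg hj' h
  have he : ∃ i', (i', k) ∈ g ∧ k < i' := ⟨i, h, hlt⟩
  unfold tauFun
  rw [dif_neg hne, dif_pos he, unique_snd hg he.choose_spec.1 h]

lemma tauFun_fst' {g : Finset (Fin n × Fin n)} (hg : IsGLayer g) {k j : Fin n}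
    (h : (k, j) ∈ g) (hlt : k < j) : tauFun g k = k := by
  have hne : ¬∃ j', (k, j') ∈ g ∧ j' < k := by
    rintro ⟨j', hj', hlt'⟩
    rw [unique_fst hg hj' h] at hlt'
    exact absurd hlt (not_lt.2 hlt'.le)
  have hne' : ¬∃ i', (i', k) ∈ g ∧ k < i' := by
    rintro ⟨i', hi', _⟩; exact not_both hg h hi'
  unfold tauFun
  rw [dif_neg hne, dif_neg hne']

lemma tauFun_snd' {g : Finset (Fin n × Fin n)} (hg : IsGLayer g) {k i : Fin n}
    (h : (i, k) ∈ g) (hlt : i < k) : tauFun g k = k := by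
  have hne : ¬∃ j', (k, j') ∈ g ∧ j' < k := by
    rintro ⟨j', hj', _⟩; exact not_both hg hj' h
  have hne' : ¬∃ i', (i', k) ∈ g ∧ k < i' := by
    rintro ⟨i', hi', hlt'⟩
    rw [unique_snd hg hi' h] at hlt'
    exact absurd hlt (not_lt.2 hlt'.le)
  unfold tauFun
  rw [dif_neg hne, dif_neg hne']

lemma tauFun_none {g : Finset (Fin n × Fin n)} {k : Fin n}
    (h1 : ∀ j, (k, j) ∉ g) (h2 : ∀ i, (i, k) ∉ g) : tauFun g k = k := by
  unfold tauFun
  rw [dif_neg (by rintro ⟨j, hj, _⟩; exact h1 j hj),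
    dif_neg (by rintro ⟨i, hi, _⟩; exact h2 i hi)]

lemma tauFun_invol {g : Finset (Fin n × Fin n)} (hg : IsGLayer g) :
    Function.Involutive (tauFun g) := by
  intro k
  by_cases h1 : ∃ j, (k, j) ∈ g ∧ j < k
  · obtain ⟨j, hj, hlt⟩ := h1
    rw [tauFun_fst hg hj hlt, tauFun_snd hg hj hlt]
  · by_cases h2 : ∃ i, (i, k) ∈ g ∧ k < i
    · obtain ⟨i, hi, hlt⟩ := h2
      rw [tauFun_snd hg hi hlt, tauFun_fst hg hi hlt]
    · push_neg at h1 h2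
      have hk : tauFun g k = k := by
        by_cases ha : ∃ j, (k, j) ∈ g
        · obtain ⟨j, hj⟩ := ha
          have : k < j := lt_of_le_of_ne (h1 j hj) (hg.1 _ hj)
          exact tauFun_fst' hg hj this
        · by_cases hb : ∃ i, (i, k) ∈ g
          · obtain ⟨i, hi⟩ := hb
            have : i < k := lt_of_le_of_ne (h2 i hi) (hg.1 _ hi)
            exact tauFun_snd' hg hi this
          · push_neg at ha hb
            exact tauFun_none ha hb
      rw [hk, hk]

/-- Involution as a permutation. -/
noncomputable def tauPerm {g : Finset (Fin n × Fin n)} (hg : IsGLayer g) : Equiv.Perm (Fin n) :=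
  (tauFun_invol hg).toPerm

@[simp] lemma tauPerm_apply {g : Finset (Fin n × Fin n)} (hg : IsGLayer g) (k : Fin n) :
    tauPerm hg k = tauFun g k := rfl

/-- Standardized layer: each comparator put in increasing order. -/
def std (g : Finset (Fin n × Fin n)) : Finset (Fin n × Fin n) :=
  g.image (fun c => if c.1 < c.2 then c else (c.2, c.1))

lemma mem_std_fwd {g : Finset (Fin n × Fin n)} {a b : Fin n} (h : (a, b) ∈ g) (hlt : a < b) :
    (a, b) ∈ std g := by
  refine Finset.mem_image.2 ⟨(a, b), h, ?_⟩
  simp [hlt]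

lemma mem_std_rev {g : Finset (Fin n × Fin n)} {a b : Fin n} (h : (a, b) ∈ g) (hlt : b < a) :
    (b, a) ∈ std g := by
  refine Finset.mem_image.2 ⟨(a, b), h, ?_⟩
  simp [not_lt.2 hlt.le]

lemma mem_std_elim {g : Finset (Fin n × Fin n)} {a b : Fin n} (h : (a, b) ∈ std g) :
    (a, b) ∈ g ∨ (b, a) ∈ g := by
  obtain ⟨c, hc, hce⟩ := Finset.mem_image.1 h
  by_cases hlt : c.1 < c.2
  · rw [if_pos hlt] at hce
    left; rw [← hce]; exact hc
  · rw [if_neg hlt] at hce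
    obtain ⟨h1, h2⟩ := Prod.mk.injEq .. ▸ hce
    right; rw [← h1, ← h2]; simpa using hc

lemma std_layer {g : Finset (Fin n × Fin n)} (hg : IsGLayer g) : IsLayer (std g) := by
  constructor
  · rintro ⟨a, b⟩ hc
    obtain ⟨c, hc', hce⟩ := Finset.mem_image.1 hc
    by_cases hlt : c.1 < c.2
    · rw [if_pos hlt] at hce; rw [← hce]; exact hlt
    · rw [if_neg hlt] at hce; rw [← hce]
      exact lt_of_le_of_ne (not_lt.1 hlt) (Ne.symm (hg.1 _ hc'))
  · rintro c hc c' hc' hne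
    obtain ⟨a, ha, hae⟩ := Finset.mem_image.1 hc
    obtain ⟨b, hb, hbe⟩ := Finset.mem_image.1 hc'
    have hab : a ≠ b := by rintro rfl; exact hne (hae.symm.trans hbe)
    obtain ⟨d1, d2, d3, d4⟩ := hg.2 _ ha _ hb hab
    subst hae hbe
    split_ifs <;> exact ⟨by assumption, by assumption, by assumption, by assumption⟩

lemma applyLayer_untangle {g : Finset (Fin n × Fin n)} (hg : IsGLayer g) (x : Fin n → Bool)
    (k : Fin n) : applyLayer g x k = applyLayer (std g) x (tauFun g k) := by
  have hstd : IsGLayer (std g) := (std_layer hg).g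
  by_cases h1 : ∃ j, (k, j) ∈ g
  · obtain ⟨j, hj⟩ := h1
    rcases lt_or_ge k j with hlt | hle
    · rw [tauFun_fst' hg hj hlt, applyLayer_min hg hj, applyLayer_min hstd (mem_std_fwd hj hlt)]
    · have hlt : j < k := lt_of_le_of_ne hle (fun h => hg.1 _ hj h.symm)
      rw [tauFun_fst hg hj hlt, applyLayer_min hg hj,
        applyLayer_min hstd (mem_std_rev hj hlt), Bool.and_comm]
  · by_cases h2 : ∃ i, (i, k) ∈ g
    · obtain ⟨i, hi⟩ := h2
      rcases lt_or_ge i k with hlt | hle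
      · rw [tauFun_snd' hg hi hlt, applyLayer_max hg hi,
          applyLayer_max hstd (mem_std_fwd hi hlt)]
      · have hlt : k < i := lt_of_le_of_ne hle (fun h => hg.1 _ hi h.symm)
        rw [tauFun_snd hg hi hlt, applyLayer_max hg hi,
          applyLayer_max hstd (mem_std_rev hi hlt), Bool.or_comm]
    · push_neg at h1 h2
      rw [tauFun_none h1 h2, applyLayer_none h1 h2]
      refine (applyLayer_none ?_ ?_ x).symm
      · intro b hb
        rcases mem_std_elim hb with h | h
        · exact h1 b h
        · exact h2 b h
      · intro a ha
        rcases mem_std_elim ha with h | h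
        · exact h2 a h
        · exact h1 a h

/- ## Sorted inputs are fixed points of standard networks -/

lemma band_of_le {a b : Bool} (h : a ≤ b) : (a && b) = a := by
  cases a <;> cases b <;> revert h <;> decide

lemma bor_of_le {a b : Bool} (h : a ≤ b) : (a || b) = b := by
  cases a <;> cases b <;> revert h <;> decide

lemma applyLayer_sorted {l : Finset (Fin n × Fin n)} (hl : IsLayer l) {x : Fin n → Bool}
    (hx : Monotone x) : applyLayer l x = x := by
  funext k
  by_cases h1 : ∃ j, (k, j) ∈ l
  · obtain ⟨j, hj⟩ := h1
    rw [applyLayer_min hl.g hj, band_of_le (hx (hl.1 _ hj).le)]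
  · by_cases h2 : ∃ i, (i, k) ∈ l
    · obtain ⟨i, hi⟩ := h2
      rw [applyLayer_max hl.g hi, bor_of_le (hx (hl.1 _ hi).le)]
    · push_neg at h1 h2
      exact applyLayer_none h1 h2 x

lemma applyNet_sorted {P : List (Finset (Fin n × Fin n))} (hP : ∀ l ∈ P, IsLayer l)
    {x : Fin n → Bool} (hx : Monotone x) : applyNet P x = x := by
  induction P with
  | nil => rfl
  | cons l P ih =>
    rw [applyNet_cons, applyLayer_sorted (hP l (by simp)) hx]
    exact ih (fun l' hl' => hP l' (by simp [hl']))

/- ## Monotone boolean vectors with equal counts are equal -/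

noncomputable def ones (u : Fin n → Bool) : ℕ := (Finset.univ.filter (fun i => u i = true)).card

lemma ones_lt {u v : Fin n → Bool} (hu : Monotone u) (hv : Monotone v) {i : Fin n}
    (hui : u i = true) (hvi : v i = false) : ones v < ones u := by
  apply Finset.card_lt_card
  rw [Finset.ssubset_def]
  constructor
  · intro j hj
    simp only [Finset.mem_filter, Finset.mem_univ, true_and] at hj ⊢
    have hij : i ≤ j := by
      by_contra hc
      have hle := hv (le_of_not_ge hc)
      rw [hj, hvi] at hle
      exact absurd hle (by decide)
    have hle := hu hij
    rw [hui] at hle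
    cases hju : u j
    · rw [hju] at hle; exact absurd hle (by decide)
    · rfl
  · intro hc
    have hi : i ∈ Finset.univ.filter (fun i => u i = true) := by simp [hui]
    have := hc hi
    simp [hvi] at this

lemma mono_ones_eq {u v : Fin n → Bool} (hu : Monotone u) (hv : Monotone v)
    (hc : ones u = ones v) : u = v := by
  funext k
  cases hku : u k <;> cases hkv : v k
  · rfl
  · exact absurd hc (ne_of_lt (ones_lt hv hu hkv hku))
  · exact absurd hc.symm (ne_of_lt (ones_lt hu hv hku hkv))
  · rfl

lemma ones_comp (ρ : Equiv.Perm (Fin n)) (s : Fin n → Bool) :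
    ones (fun k => s (ρ k)) = ones s := by
  unfold ones
  rw [← Finset.card_image_of_injective _ ρ.injective]
  congr 1
  ext a
  simp only [Finset.mem_image, Finset.mem_filter, Finset.mem_univ, true_and]
  constructor
  · rintro ⟨i, hi, rfl⟩; exact hi
  · intro ha; exact ⟨ρ.symm a, by simpa using ha, by simp⟩

/- ## Base case: a standard network sorting into a fixed permuted order sorts -/

lemma sorts_of_perm {P : List (Finset (Fin n × Fin n))} (hP : ∀ l ∈ P, IsLayer l)
    (ρ : Equiv.Perm (Fin n)) (h : ∀ x, Monotone (fun k => applyNet P x (ρ k))) : Sorts P := by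
  intro x
  set z := applyNet P x with hz
  set s : Fin n → Bool := fun k => z (ρ k) with hs
  have hsm : Monotone s := h x
  have hfix : applyNet P s = s := applyNet_sorted hP hsm
  have hsρ : Monotone (fun k => s (ρ k)) := by
    have := h s
    rwa [hfix] at this
  have heq : (fun k => s (ρ k)) = s :=
    mono_ones_eq hsρ hsm (ones_comp ρ s)
  have hzs : z = s := by
    funext k
    have h1 : s k = s (ρ.symm k) := by
      have := congrFun heq (ρ.symm k)
      simpa using this
    have h2 : z k = s (ρ.symm k) := by simp [hs]
    rw [h2, ← h1]
  rw [hzs]; exact hsm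

/- ## The untangling induction -/

lemma untangle : ∀ (m : ℕ) (G : List (Finset (Fin n × Fin n))), G.length = m →
    (∀ g ∈ G, IsGLayer g) →
    ∀ (P : List (Finset (Fin n × Fin n))), (∀ l ∈ P, IsLayer l) →
    ∀ (ρ : Equiv.Perm (Fin n)), (∀ x, Monotone (fun k => applyNet (P ++ G) x (ρ k))) →
    ∃ G' : List (Finset (Fin n × Fin n)),
      (∀ l ∈ G', IsLayer l) ∧ G'.length = G.length ∧ Sorts (P ++ G') := by
  intro m
  induction m with
  | zero =>
    intro G hGlen _ P hP ρ h
    rw [List.length_eq_zero_iff] at hGlen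
    subst hGlen
    refine ⟨[], by simp, rfl, ?_⟩
    have : Sorts P := sorts_of_perm hP ρ (by simpa using h)
    simpa using this
  | succ m ih =>
    rintro (_ | ⟨g, G⟩) hGlen hG P hP ρ h
    · simp at hGlen
    have hGlen' : G.length = m := by simpa using hGlen
    have hg : IsGLayer g := hG g (by simp)
    set τ : Equiv.Perm (Fin n) := tauPerm hg with hτ
    have hGrest : ∀ l ∈ G, IsGLayer l := fun l hl => hG l (by simp [hl])
    -- Key rewriting of the network value
    have key : ∀ (x : Fin n → Bool) (k : Fin n),
        applyNet (P ++ g :: G) x k = applyNet ((P ++ [std g]) ++ gmap τ G) x (τ k) := by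
      intro x k
      rw [applyNet_append, applyNet_cons]
      rw [applyNet_append, applyNet_append, applyNet_cons, applyNet_nil]
      set w := applyNet P x with hw
      have h1 : applyLayer g w = fun m => applyLayer (std g) w (τ m) :=
        funext fun m => applyLayer_untangle hg w m
      have h2 : (fun m => applyNet (gmap τ G) (applyLayer (std g) w) (τ m)) =
          applyNet G (fun m => applyLayer (std g) w (τ m)) :=
        applyNet_gmap G hGrest (applyLayer (std g) w)
      rw [h1, ← h2]
    have h' : ∀ x, Monotone (fun k =>
        applyNet ((P ++ [std g]) ++ gmap τ G) x ((ρ.trans τ) k)) := by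
      intro x
      have hm := h x
      have heq : (fun k => applyNet (P ++ g :: G) x (ρ k)) =
          (fun k => applyNet ((P ++ [std g]) ++ gmap τ G) x ((ρ.trans τ) k)) := by
        funext k
        rw [key x (ρ k)]
        rfl
      rwa [heq] at hm
    have hglen : (gmap τ G).length = m := by simpa [gmap] using hGlen'
    obtain ⟨G', hG', hlen, hsorts⟩ := ih (gmap τ G) hglen
      (fun l hl => by
        obtain ⟨l', hl', rfl⟩ := List.mem_map.1 hl
        exact pmap_glayer (hGrest l' hl'))
      (P ++ [std g]) (by
        intro l hl
        rcases List.mem_append.1 hl with hml | hml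
        · exact hP l hml
        · simp at hml; rw [hml]; exact std_layer hg)
      (ρ.trans τ) h'
    refine ⟨std g :: G', ?_, ?_, ?_⟩
    · intro l hl
      rcases List.mem_cons.1 hl with hml | hml
      · rw [hml]; exact std_layer hg
      · exact hG' l hml
    · simp only [List.length_cons, hlen, hglen, hGlen']
    · have heq : P ++ std g :: G' = (P ++ [std g]) ++ G' := by simp
      rw [heq]; exact hsorts

lemma isLayer_Fn : IsLayer (Fn n) := by
  constructor
  · rintro ⟨a, b⟩ hc
    simp only [Fn, Finset.mem_filter, Finset.mem_univ, true_and] at hc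
    have hba : (b : ℕ) = (a : ℕ) + 1 := hc.2
    show a < b
    exact Fin.lt_def.2 (by omega)
  · rintro ⟨a, b⟩ hc ⟨a', b'⟩ hc' hne
    simp only [Fn, Finset.mem_filter, Finset.mem_univ, true_and] at hc hc'
    have ha : (a : ℕ) % 2 = 0 := hc.1
    have hb : (b : ℕ) = (a : ℕ) + 1 := hc.2
    have ha' : (a' : ℕ) % 2 = 0 := hc'.1
    have hb' : (b' : ℕ) = (a' : ℕ) + 1 := hc'.2
    have hne' : (a : ℕ) ≠ (a' : ℕ) := by
      intro hh
      apply hne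
      have h1 : a = a' := Fin.ext hh
      have h2 : b = b' := Fin.ext (by omega)
      rw [h1, h2]
    refine ⟨fun hh => hne' (congrArg Fin.val hh), fun hh => ?_, fun hh => ?_, fun hh => ?_⟩
    · have h3 : (a : ℕ) = (b' : ℕ) := congrArg Fin.val hh; omega
    · have h3 : (b : ℕ) = (a' : ℕ) := congrArg Fin.val hh; omega
    · have h3 : (b : ℕ) = (b' : ℕ) := congrArg Fin.val hh; omega

end AuxSN

/-- Lemma 1 of the paper.
If `π` fixes `F_n` (as a set of comparators), `L` is a layer such that `π(L)` is again a
layer, and `F_n;L;C` is a sorting network of depth `d` for some network `C`, then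
`F_n;π(L);C'` is a sorting network of depth `d` for some network `C'`. -/
theorem statement0 (n : ℕ) (hn : 2 ≤ n) (π : Equiv.Perm (Fin n))
    (hπF : (Fn n).image (fun c => (π c.1, π c.2)) = Fn n)
    (L : Finset (Fin n × Fin n)) (hL : IsLayer L)
    (hπL : ∀ c ∈ L, π c.1 < π c.2) (d : ℕ)
    (h : ∃ C : List (Finset (Fin n × Fin n)),
      (∀ L' ∈ C, IsLayer L') ∧ (Fn n :: L :: C).length = d ∧ Sorts (Fn n :: L :: C)) :
    ∃ C' : List (Finset (Fin n × Fin n)),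
      (∀ L' ∈ C', IsLayer L') ∧
      (Fn n :: (L.image (fun c => (π c.1, π c.2))) :: C').length = d ∧
      Sorts (Fn n :: (L.image (fun c => (π c.1, π c.2))) :: C') := by
  classical
  obtain ⟨C, hC, hlen, hsorts⟩ := h
  have hLlayer : IsLayer (AuxSN.pmap π L) := by
    constructor
    · rintro ⟨a, b⟩ hc
      obtain ⟨a', b', hm, rfl, rfl⟩ := AuxSN.mem_pmap' hc
      exact hπL _ hm
    · exact (AuxSN.pmap_glayer hL.g).2
  have hNet : ∀ g ∈ (Fn n :: L :: C), IsGLayer g := by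
    intro g hg
    rcases List.mem_cons.1 hg with hm | hm
    · rw [hm]; exact AuxSN.isLayer_Fn.g
    rcases List.mem_cons.1 hm with hm' | hm'
    · rw [hm']; exact hL.g
    · exact (hC g hm').g
  have hhyp : ∀ x, Monotone (fun k =>
      applyNet ([Fn n, AuxSN.pmap π L] ++ AuxSN.gmap π C) x (π k)) := by
    intro x
    have heq : [Fn n, AuxSN.pmap π L] ++ AuxSN.gmap π C = AuxSN.gmap π (Fn n :: L :: C) := by
      show Fn n :: AuxSN.pmap π L :: AuxSN.gmap π C =
        AuxSN.pmap π (Fn n) :: AuxSN.pmap π L :: AuxSN.gmap π C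
      rw [show AuxSN.pmap π (Fn n) = Fn n from hπF]
    rw [heq, AuxSN.applyNet_gmap _ hNet x]
    exact hsorts _
  obtain ⟨C', hC', hlen', hsorts'⟩ := AuxSN.untangle (AuxSN.gmap π C).length
    (AuxSN.gmap π C) rfl
    (fun l hl => by
      obtain ⟨l', hl', rfl⟩ := List.mem_map.1 hl
      exact AuxSN.pmap_glayer ((hC l' hl').g))
    [Fn n, AuxSN.pmap π L]
    (by
      intro l hl
      rcases List.mem_cons.1 hl with hm | hm
      · rw [hm]; exact AuxSN.isLayer_Fn
      · simp at hm; rw [hm]; exact hLlayer)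
    π hhyp
  refine ⟨C', hC', ?_, ?_⟩
  · have hcc : C'.length = C.length := by simpa [AuxSN.gmap] using hlen'
    simp only [List.length_cons] at hlen ⊢
    omega
  · exact hsorts'
end

section
/- Let L_a and L_b be layers on n channels and suppose there is a permutation π of {1,…,n} such that outputs(F_n;L_b) ⊆ π(outputs(F_n;L_a)), where π acts on binary vectors by permuting coordinates (the value at position i moves to position π(i)). If there exists a comparator network C such that F_n;L_a;C is a sorting network of depth d, then there exists a comparator network C' such that F_n;L_b;C' is a sorting network of depth d. -/
/-- A generalized layer: comparators may be "reversed" but channels are still disjoint. -/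
def GenLayer {n : ℕ} (L : Finset (Fin n × Fin n)) : Prop :=
  (∀ c ∈ L, c.1 ≠ c.2) ∧
  (∀ c ∈ L, ∀ c' ∈ L, c ≠ c' →
    c.1 ≠ c'.1 ∧ c.1 ≠ c'.2 ∧ c.2 ≠ c'.1 ∧ c.2 ≠ c'.2)

lemma IsLayer.genLayer {n : ℕ} {L : Finset (Fin n × Fin n)} (h : IsLayer L) : GenLayer L :=
  ⟨fun c hc => ne_of_lt (h.1 c hc), h.2⟩

lemma GenLayer.eq_of_share {n : ℕ} {L : Finset (Fin n × Fin n)} (hL : GenLayer L)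
    {c c' : Fin n × Fin n} (hc : c ∈ L) (hc' : c' ∈ L)
    (h : c.1 = c'.1 ∨ c.1 = c'.2 ∨ c.2 = c'.1 ∨ c.2 = c'.2) : c = c' := by
  by_contra hne
  obtain ⟨h1, h2, h3, h4⟩ := hL.2 c hc c' hc' hne
  tauto

lemma applyLayer_fst {n : ℕ} {L : Finset (Fin n × Fin n)} (hL : GenLayer L)
    {i j : Fin n} (hij : (i, j) ∈ L) (x : Fin n → Bool) :
    applyLayer L x i = (x i && x j) := by
  have h : ∃ j', (i, j') ∈ L := ⟨j, hij⟩
  have hcj : h.choose = j := by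
    have hsp := h.choose_spec
    have := hL.eq_of_share hsp hij (Or.inl rfl)
    exact congrArg Prod.snd this
  show (if h : ∃ j', (i, j') ∈ L then x i && x h.choose
    else if h' : ∃ i', (i', i) ∈ L then x h'.choose || x i else x i) = (x i && x j)
  rw [dif_pos h, hcj]

lemma applyLayer_snd {n : ℕ} {L : Finset (Fin n × Fin n)} (hL : GenLayer L)
    {i j : Fin n} (hij : (i, j) ∈ L) (x : Fin n → Bool) :
    applyLayer L x j = (x i || x j) := by
  have hno : ¬ ∃ j', (j, j') ∈ L := by
    rintro ⟨j', hj'⟩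
    have := hL.eq_of_share hj' hij (Or.inr (Or.inl rfl))
    have h1 : j = i := congrArg Prod.fst this
    exact hL.1 _ hij (h1 ▸ rfl)
  have h' : ∃ i', (i', j) ∈ L := ⟨i, hij⟩
  have hci : h'.choose = i := by
    have hsp := h'.choose_spec
    have := hL.eq_of_share hsp hij (Or.inr (Or.inr (Or.inr rfl)))
    exact congrArg Prod.fst this
  show (if h : ∃ j', (j, j') ∈ L then x j && x h.choose
    else if h' : ∃ i', (i', j) ∈ L then x h'.choose || x j else x j) = (x i || x j)
  rw [dif_neg hno, dif_pos h', hci]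

lemma applyLayer_free {n : ℕ} {L : Finset (Fin n × Fin n)}
    {k : Fin n} (hfree : ∀ c ∈ L, k ≠ c.1 ∧ k ≠ c.2) (x : Fin n → Bool) :
    applyLayer L x k = x k := by
  have h1 : ¬ ∃ j, (k, j) ∈ L := by rintro ⟨j, hj⟩; exact (hfree _ hj).1 rfl
  have h2 : ¬ ∃ i, (i, k) ∈ L := by rintro ⟨i, hi⟩; exact (hfree _ hi).2 rfl
  show (if h : ∃ j, (k, j) ∈ L then x k && x h.choose
    else if h' : ∃ i, (i, k) ∈ L then x h'.choose || x k else x k) = x k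
  rw [dif_neg h1, dif_neg h2]

lemma applyNet_cons {n : ℕ} (L : Finset (Fin n × Fin n)) (N : List (Finset (Fin n × Fin n)))
    (x : Fin n → Bool) : applyNet (L :: N) x = applyNet N (applyLayer L x) := rfl

lemma step_lemma {n : ℕ} {L : Finset (Fin n × Fin n)} (hL : GenLayer L)
    (τ : Equiv.Perm (Fin n)) :
    ∃ L', IsLayer L' ∧ ∃ τ₁ : Equiv.Perm (Fin n),
      ∀ x, applyLayer L' (x ∘ ⇑τ) = applyLayer L x ∘ ⇑τ₁ := by
  classical
  set σ : Fin n → Fin n := ⇑τ.symm with hσdef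
  have hσinj : Function.Injective σ := τ.symm.injective
  -- two comparators sharing a σ-endpoint are equal
  have hshare : ∀ c ∈ L, ∀ c' ∈ L,
      (σ c.1 = σ c'.1 ∨ σ c.1 = σ c'.2 ∨ σ c.2 = σ c'.1 ∨ σ c.2 = σ c'.2) → c = c' := by
    intro c hc c' hc' hor
    refine hL.eq_of_share hc hc' ?_
    rcases hor with h | h | h | h
    · exact Or.inl (hσinj h)
    · exact Or.inr (Or.inl (hσinj h))
    · exact Or.inr (Or.inr (Or.inl (hσinj h)))
    · exact Or.inr (Or.inr (Or.inr (hσinj h)))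
  have hne : ∀ c ∈ L, σ c.1 ≠ σ c.2 := fun c hc e => hL.1 c hc (hσinj e)
  -- the straightened image layer
  set g : Fin n × Fin n → Fin n × Fin n :=
    fun c => if σ c.1 < σ c.2 then (σ c.1, σ c.2) else (σ c.2, σ c.1) with hgdef
  set L' := L.image g with hL'def
  have hmem_fwd : ∀ c ∈ L, σ c.1 < σ c.2 → (σ c.1, σ c.2) ∈ L' := by
    intro c hc h
    exact Finset.mem_image.2 ⟨c, hc, by simp [hgdef, if_pos h]⟩
  have hmem_rev : ∀ c ∈ L, σ c.2 < σ c.1 → (σ c.2, σ c.1) ∈ L' := by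
    intro c hc h
    refine Finset.mem_image.2 ⟨c, hc, ?_⟩
    simp only [hgdef]
    rw [if_neg (by exact not_lt.2 (le_of_lt h))]
  -- L' is a (standard) layer
  have hL' : IsLayer L' := by
    constructor
    · intro d hd
      obtain ⟨c, hc, rfl⟩ := Finset.mem_image.1 hd
      simp only [hgdef]
      split_ifs with h
      · exact h
      · exact lt_of_le_of_ne (not_lt.1 h) (Ne.symm (hne c hc))
    · intro d hd d' hd' hdd'
      obtain ⟨c, hc, rfl⟩ := Finset.mem_image.1 hd
      obtain ⟨c', hc', rfl⟩ := Finset.mem_image.1 hd'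
      have hcc' : c ≠ c' := by rintro rfl; exact hdd' rfl
      have base := hL.2 c hc c' hc' hcc'
      have hall : ∀ a b : Fin n, (a = c.1 ∨ a = c.2) → (b = c'.1 ∨ b = c'.2) → σ a ≠ σ b := by
        intro a b ha hb e
        have := hσinj e
        rcases ha with rfl | rfl <;> rcases hb with rfl | rfl
        · exact base.1 this
        · exact base.2.1 this
        · exact base.2.2.1 this
        · exact base.2.2.2 this
      refine ⟨?_, ?_, ?_, ?_⟩ <;>
        (simp only [hgdef]; split_ifs) <;>
        first
          | exact hall _ _ (Or.inl rfl) (Or.inl rfl)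
          | exact hall _ _ (Or.inl rfl) (Or.inr rfl)
          | exact hall _ _ (Or.inr rfl) (Or.inl rfl)
          | exact hall _ _ (Or.inr rfl) (Or.inr rfl)
  have hL'gen : GenLayer L' := hL'.genLayer
  -- the swap function for reversed comparators
  set sFun : Fin n → Fin n := fun k =>
    if h : ∃ c, c ∈ L ∧ σ c.2 < σ c.1 ∧ σ c.1 = k then σ h.choose.2
    else if h' : ∃ c, c ∈ L ∧ σ c.2 < σ c.1 ∧ σ c.2 = k then σ h'.choose.1
    else k with hsdef
  -- action of sFun
  have hs_rev1 : ∀ c ∈ L, σ c.2 < σ c.1 → sFun (σ c.1) = σ c.2 := by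
    intro c hc h
    have hex : ∃ c', c' ∈ L ∧ σ c'.2 < σ c'.1 ∧ σ c'.1 = σ c.1 := ⟨c, hc, h, rfl⟩
    have hsp := hex.choose_spec
    have hceq : hex.choose = c := hshare _ hsp.1 _ hc (Or.inl hsp.2.2)
    simp only [hsdef]
    rw [dif_pos hex, hceq]
  have hs_rev2 : ∀ c ∈ L, σ c.2 < σ c.1 → sFun (σ c.2) = σ c.1 := by
    intro c hc h
    have hno : ¬ ∃ c', c' ∈ L ∧ σ c'.2 < σ c'.1 ∧ σ c'.1 = σ c.2 := by
      rintro ⟨c', hc', _, he⟩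
      have hceq : c' = c := hshare _ hc' _ hc (Or.inr (Or.inl he))
      subst hceq
      exact hne c' hc' he
    have hex : ∃ c', c' ∈ L ∧ σ c'.2 < σ c'.1 ∧ σ c'.2 = σ c.2 := ⟨c, hc, h, rfl⟩
    have hsp := hex.choose_spec
    have hceq : hex.choose = c := hshare _ hsp.1 _ hc (Or.inr (Or.inr (Or.inr hsp.2.2)))
    simp only [hsdef]
    rw [dif_neg hno, dif_pos hex, hceq]
  have hs_fwd1 : ∀ c ∈ L, σ c.1 < σ c.2 → sFun (σ c.1) = σ c.1 := by
    intro c hc h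
    have hno : ¬ ∃ c', c' ∈ L ∧ σ c'.2 < σ c'.1 ∧ σ c'.1 = σ c.1 := by
      rintro ⟨c', hc', hrev, he⟩
      have hceq : c' = c := hshare _ hc' _ hc (Or.inl he)
      subst hceq
      exact absurd h (not_lt.2 (le_of_lt hrev))
    have hno' : ¬ ∃ c', c' ∈ L ∧ σ c'.2 < σ c'.1 ∧ σ c'.2 = σ c.1 := by
      rintro ⟨c', hc', _, he⟩
      have hceq : c' = c := hshare _ hc' _ hc (Or.inr (Or.inr (Or.inl he)))
      subst hceq
      exact hne c' hc' he.symm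
    simp only [hsdef]
    rw [dif_neg hno, dif_neg hno']
  have hs_fwd2 : ∀ c ∈ L, σ c.1 < σ c.2 → sFun (σ c.2) = σ c.2 := by
    intro c hc h
    have hno : ¬ ∃ c', c' ∈ L ∧ σ c'.2 < σ c'.1 ∧ σ c'.1 = σ c.2 := by
      rintro ⟨c', hc', _, he⟩
      have hceq : c' = c := hshare _ hc' _ hc (Or.inr (Or.inl he))
      subst hceq
      exact hne c' hc' he
    have hno' : ¬ ∃ c', c' ∈ L ∧ σ c'.2 < σ c'.1 ∧ σ c'.2 = σ c.2 := by
      rintro ⟨c', hc', hrev, he⟩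
      have hceq : c' = c := hshare _ hc' _ hc (Or.inr (Or.inr (Or.inr he)))
      subst hceq
      exact absurd h (not_lt.2 (le_of_lt hrev))
    simp only [hsdef]
    rw [dif_neg hno, dif_neg hno']
  have hs_free : ∀ k : Fin n, (∀ c ∈ L, k ≠ σ c.1 ∧ k ≠ σ c.2) → sFun k = k := by
    intro k hk
    have hno : ¬ ∃ c', c' ∈ L ∧ σ c'.2 < σ c'.1 ∧ σ c'.1 = k := by
      rintro ⟨c', hc', _, he⟩
      exact (hk c' hc').1 he.symm
    have hno' : ¬ ∃ c', c' ∈ L ∧ σ c'.2 < σ c'.1 ∧ σ c'.2 = k := by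
      rintro ⟨c', hc', _, he⟩
      exact (hk c' hc').2 he.symm
    simp only [hsdef]
    rw [dif_neg hno, dif_neg hno']
  -- sFun is an involution
  have hinv : Function.Involutive sFun := by
    intro k
    by_cases hk : ∃ c ∈ L, k = σ c.1 ∨ k = σ c.2
    · obtain ⟨c, hc, hk⟩ := hk
      rcases (hne c hc).lt_or_gt with hlt | hlt
      · rcases hk with rfl | rfl
        · rw [hs_fwd1 c hc hlt, hs_fwd1 c hc hlt]
        · rw [hs_fwd2 c hc hlt, hs_fwd2 c hc hlt]
      · rcases hk with rfl | rfl
        · rw [hs_rev1 c hc hlt, hs_rev2 c hc hlt]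
        · rw [hs_rev2 c hc hlt, hs_rev1 c hc hlt]
    · push_neg at hk
      rw [hs_free k hk, hs_free k hk]
  set τ₁ : Equiv.Perm (Fin n) := (Function.Involutive.toPerm sFun hinv).trans τ with hτ₁def
  have hτ₁ : ∀ k, τ₁ k = τ (sFun k) := fun k => rfl
  refine ⟨L', hL', τ₁, ?_⟩
  intro x
  funext k
  simp only [Function.comp_apply]
  have hval : ∀ i : Fin n, (x ∘ ⇑τ) (σ i) = x i := by
    intro i; simp [hσdef]
  by_cases hk : ∃ c ∈ L, k = σ c.1 ∨ k = σ c.2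
  · obtain ⟨c, hc, hk⟩ := hk
    have hcL : (c.1, c.2) ∈ L := by simpa using hc
    rcases (hne c hc).lt_or_gt with hlt | hlt
    · rcases hk with rfl | rfl
      · have e1 : τ₁ (σ c.1) = c.1 := by rw [hτ₁, hs_fwd1 c hc hlt]; simp [hσdef]
        rw [e1, applyLayer_fst hL'gen (hmem_fwd c hc hlt), hval, hval,
          applyLayer_fst hL hcL]
      · have e1 : τ₁ (σ c.2) = c.2 := by rw [hτ₁, hs_fwd2 c hc hlt]; simp [hσdef]
        rw [e1, applyLayer_snd hL'gen (hmem_fwd c hc hlt), hval, hval,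
          applyLayer_snd hL hcL]
    · rcases hk with rfl | rfl
      · have e1 : τ₁ (σ c.1) = c.2 := by rw [hτ₁, hs_rev1 c hc hlt]; simp [hσdef]
        rw [e1, applyLayer_snd hL'gen (hmem_rev c hc hlt), hval, hval,
          applyLayer_snd hL hcL]
        exact Bool.or_comm _ _
      · have e1 : τ₁ (σ c.2) = c.1 := by rw [hτ₁, hs_rev2 c hc hlt]; simp [hσdef]
        rw [e1, applyLayer_fst hL'gen (hmem_rev c hc hlt), hval, hval,
          applyLayer_fst hL hcL]
        exact Bool.and_comm _ _
  · push_neg at hk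
    have hfree' : ∀ d ∈ L', k ≠ d.1 ∧ k ≠ d.2 := by
      intro d hd
      obtain ⟨c, hc, rfl⟩ := Finset.mem_image.1 hd
      have hkc := hk c hc
      simp only [hgdef]
      split_ifs with hh
      · exact hkc
      · exact ⟨hkc.2, hkc.1⟩
    have hfreeL : ∀ c ∈ L, τ k ≠ c.1 ∧ τ k ≠ c.2 := by
      intro c hc
      constructor <;> intro e
      · exact (hk c hc).1 (by rw [← e]; simp [hσdef])
      · exact (hk c hc).2 (by rw [← e]; simp [hσdef])
    have e1 : τ₁ k = τ k := by rw [hτ₁, hs_free k hk]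
    rw [applyLayer_free hfree', e1, applyLayer_free hfreeL]
    simp

/-- Untangling: a generalized network, fed a permuted input, can be replaced by a
standard network of the same depth, up to an output permutation. -/
lemma untangle {n : ℕ} (N : List (Finset (Fin n × Fin n))) (hN : ∀ L ∈ N, GenLayer L)
    (τ : Equiv.Perm (Fin n)) :
    ∃ N' : List (Finset (Fin n × Fin n)),
      N'.length = N.length ∧ (∀ L ∈ N', IsLayer L) ∧
      ∃ ρ : Equiv.Perm (Fin n), ∀ x, applyNet N' (x ∘ ⇑τ) = applyNet N x ∘ ⇑ρ := by
  induction N generalizing τ with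
  | nil => exact ⟨[], rfl, by simp, τ, fun x => rfl⟩
  | cons L rest ih =>
    obtain ⟨L', hL', τ₁, hstep⟩ := step_lemma ((hN L (by simp)) : GenLayer L) τ
    obtain ⟨N'', hlen, hN'', ρ, hρ⟩ := ih (fun M hM => hN M (by simp [hM])) τ₁
    refine ⟨L' :: N'', by simp [hlen], ?_, ρ, ?_⟩
    · intro M hM
      rcases List.mem_cons.1 hM with rfl | hM
      · exact hL'
      · exact hN'' M hM
    · intro x
      rw [applyNet_cons, hstep x, applyNet_cons]
      exact hρ (applyLayer L x)

lemma bool_and_eq_left : ∀ {a b : Bool}, a ≤ b → (a && b) = a := by decide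

lemma bool_or_eq_right : ∀ {a b : Bool}, a ≤ b → (a || b) = b := by decide

/-- A standard layer fixes monotone (sorted) vectors. -/
lemma applyLayer_of_monotone {n : ℕ} {M : Finset (Fin n × Fin n)} (hM : IsLayer M)
    {x : Fin n → Bool} (hx : Monotone x) : applyLayer M x = x := by
  funext k
  by_cases hk : ∃ c ∈ M, k = c.1 ∨ k = c.2
  · obtain ⟨c, hc, hk⟩ := hk
    have hcM : (c.1, c.2) ∈ M := by simpa using hc
    have hle : x c.1 ≤ x c.2 := hx (le_of_lt (hM.1 c hc))
    rcases hk with rfl | rfl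
    · rw [applyLayer_fst hM.genLayer hcM]
      exact bool_and_eq_left hle
    · rw [applyLayer_snd hM.genLayer hcM]
      exact bool_or_eq_right hle
  · push_neg at hk
    exact applyLayer_free hk x

/-- A standard network fixes monotone (sorted) vectors. -/
lemma applyNet_of_monotone {n : ℕ} {N : List (Finset (Fin n × Fin n))}
    (hN : ∀ M ∈ N, IsLayer M) {x : Fin n → Bool} (hx : Monotone x) : applyNet N x = x := by
  induction N with
  | nil => rfl
  | cons M rest ih =>
    rw [applyNet_cons, applyLayer_of_monotone (hN M (by simp)) hx]
    exact ih (fun M' hM' => hN M' (by simp [hM']))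

/-- Number of `true` entries. -/
def cnt {n : ℕ} (v : Fin n → Bool) : ℕ := ∑ i, cond (v i) 1 0

lemma cnt_comp_perm {n : ℕ} (v : Fin n → Bool) (ρ : Equiv.Perm (Fin n)) :
    cnt (v ∘ ⇑ρ) = cnt v :=
  Equiv.sum_comp ρ (fun i => cond (v i) 1 0)

lemma monotone_eq_of_cnt {n : ℕ} {v w : Fin n → Bool} (hv : Monotone v) (hw : Monotone w)
    (hc : cnt v = cnt w) : v = w := by
  have hb : ∀ a b : Bool, a < b → a = false ∧ b = true := by decide
  have htot : (∀ i, v i ≤ w i) ∨ (∀ i, w i ≤ v i) := by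
    by_contra hcon
    push_neg at hcon
    obtain ⟨⟨i, hi⟩, ⟨j, hj⟩⟩ := hcon
    obtain ⟨hwi, hvi⟩ := hb _ _ hi
    obtain ⟨hvj, hwj⟩ := hb _ _ hj
    rcases le_total i j with hij | hij
    · have := hv hij; rw [hvi, hvj] at this; exact absurd this (by decide)
    · have := hw hij; rw [hwj, hwi] at this; exact absurd this (by decide)
  have key : ∀ (v w : Fin n → Bool), (∀ i, v i ≤ w i) → cnt v = cnt w → v = w := by
    intro v w hle hcnt
    have hcond : ∀ a b : Bool, a ≤ b → (cond a 1 0 : ℕ) ≤ cond b 1 0 := by decide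
    have hcond' : ∀ a b : Bool, (cond a 1 0 : ℕ) = cond b 1 0 → a = b := by decide
    have hptle : ∀ i ∈ Finset.univ, (cond (v i) 1 0 : ℕ) ≤ cond (w i) 1 0 :=
      fun i _ => hcond _ _ (hle i)
    have := (Finset.sum_eq_sum_iff_of_le hptle).1 hcnt
    funext i
    exact hcond' _ _ (this i (Finset.mem_univ i))
  rcases htot with h | h
  · exact key v w h hc
  · exact (key w v h hc.symm).symm

/-- Threshold vectors. -/
def tvec (n : ℕ) (k : ℕ) : Fin n → Bool := fun i => decide (k ≤ i.val)

lemma tvec_mono (n k : ℕ) : Monotone (tvec n k) := by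
  intro i j hij
  simp only [tvec]
  by_cases h : k ≤ i.val
  · rw [decide_eq_true h, decide_eq_true (le_trans h hij)]
  · rw [decide_eq_false h]
    exact Bool.false_le _

lemma isLayer_Fn (n : ℕ) : IsLayer (Fn n) := by
  have hmem : ∀ c ∈ Fn n, c.1.val % 2 = 0 ∧ c.2.val = c.1.val + 1 := by
    intro c hc
    simpa [Fn] using hc
  constructor
  · intro c hc
    obtain ⟨h1, h2⟩ := hmem c hc
    exact Fin.lt_def.2 (by omega)
  · intro c hc c' hc' hne
    obtain ⟨h1, h2⟩ := hmem c hc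
    obtain ⟨h1', h2'⟩ := hmem c' hc'
    have hext : c.1.val = c'.1.val → c = c' := by
      intro he
      have e1 : c.1 = c'.1 := Fin.ext he
      have e2 : c.2 = c'.2 := Fin.ext (by omega)
      exact Prod.ext e1 e2
    refine ⟨?_, ?_, ?_, ?_⟩ <;> intro he <;> have := congrArg Fin.val he
    · exact hne (hext this)
    · omega
    · omega
    · exact hne (hext (by omega))

/-- Lemma 2 of the paper.
If `outputs(F_n;L_b) ⊆ π(outputs(F_n;L_a))`, where the permutation `π` acts on binary
vectors by moving the value at position `i` to position `π(i)` (i.e. `x ↦ x ∘ π⁻¹`),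
and `F_n;L_a;C` is a sorting network of depth `d`, then some `F_n;L_b;C'` is a
sorting network of depth `d`. -/
theorem statement1 (n : ℕ) (La Lb : Finset (Fin n × Fin n))
    (hLa : IsLayer La) (hLb : IsLayer Lb) (π : Equiv.Perm (Fin n))
    (hsub : outputs [Fn n, Lb] ⊆ (fun x : Fin n → Bool => x ∘ π.symm) '' outputs [Fn n, La])
    (d : ℕ)
    (h : ∃ C : List (Finset (Fin n × Fin n)),
      (∀ L' ∈ C, IsLayer L') ∧ (Fn n :: La :: C).length = d ∧ Sorts (Fn n :: La :: C)) :
    ∃ C' : List (Finset (Fin n × Fin n)),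
      (∀ L' ∈ C', IsLayer L') ∧ (Fn n :: Lb :: C').length = d ∧ Sorts (Fn n :: Lb :: C') := by
  classical
  obtain ⟨C, hC, hlen, hsorts⟩ := h
  obtain ⟨C', hlen', hC', ρ, hρ⟩ := untangle C (fun L hL => (hC L hL).genLayer) π.symm
  have hFnLb : ∀ M ∈ [Fn n, Lb], IsLayer M := by
    intro M hM
    rcases List.mem_cons.1 hM with rfl | hM
    · exact isLayer_Fn n
    · rcases List.mem_cons.1 hM with rfl | hM
      · exact hLb
      · simp at hM
  -- every output of Fn;Lb is mapped by C' to (monotone) ∘ ρ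
  have hkey : ∀ v ∈ outputs [Fn n, Lb], ∃ w : Fin n → Bool,
      Monotone w ∧ applyNet C' v = w ∘ ⇑ρ := by
    intro v hv
    obtain ⟨u, hu, huv⟩ := hsub hv
    obtain ⟨y, hy⟩ := hu
    refine ⟨applyNet C u, ?_, ?_⟩
    · have he : applyNet C u = applyNet (Fn n :: La :: C) y := by
        rw [← hy]; rfl
      rw [he]
      exact hsorts y
    · rw [← huv]
      exact hρ u
  -- ρ is the identity, via threshold vectors
  have hρid : ∀ i, ρ i = i := by
    have ht : ∀ k : ℕ, tvec n k = tvec n k ∘ ⇑ρ := by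
      intro k
      have hmono := tvec_mono n k
      have hmem : tvec n k ∈ outputs [Fn n, Lb] :=
        ⟨tvec n k, applyNet_of_monotone hFnLb hmono⟩
      obtain ⟨w, hw, hwe⟩ := hkey _ hmem
      have hfix : applyNet C' (tvec n k) = tvec n k := applyNet_of_monotone hC' hmono
      have heq : tvec n k = w ∘ ⇑ρ := by rw [← hfix, hwe]
      have hcnt : cnt (tvec n k) = cnt w := by rw [heq, cnt_comp_perm]
      have hweq : tvec n k = w := monotone_eq_of_cnt hmono hw hcnt
      rw [← hweq] at heq
      exact heq
    intro i
    have h1 := congrFun (ht i.val) i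
    have h2 := congrFun (ht (ρ i).val) i
    simp only [tvec, Function.comp_apply] at h1 h2
    have e1 : i.val ≤ (ρ i).val := by
      have := h1.symm
      rw [decide_eq_true (le_refl i.val)] at this
      exact of_decide_eq_true this
    have e2 : (ρ i).val ≤ i.val := by
      have := h2
      rw [decide_eq_true (le_refl (ρ i).val)] at this
      exact of_decide_eq_true this
    exact Fin.ext (le_antisymm e2 e1)
  refine ⟨C', hC', ?_, ?_⟩
  · simp only [List.length_cons, hlen']
    simpa using hlen
  · intro x
    obtain ⟨w, hw, hwe⟩ := hkey (applyNet [Fn n, Lb] x) ⟨x, rfl⟩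
    have he : applyNet (Fn n :: Lb :: C') x = w := by
      have h1 : applyNet (Fn n :: Lb :: C') x = applyNet C' (applyNet [Fn n, Lb] x) := rfl
      rw [h1, hwe]
      funext i
      simp [hρid i]
    rw [he]
    exact hw
end

section
/- Let C = L_1;L_2 be a two-layer comparator network on n channels, and let i be a min channel and j a max channel of C with i < j, both unused in the second layer L_2. Then the two-layer network C' obtained from C by adding the comparator (i,j) to L_2 satisfies outputs(C') ⊆ outputs(C); in particular, C is not saturated. (This is the content of pattern (1) of Theorem 1 of the paper.) -/
/-- Channel `i` is used by some comparator of `L`. -/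
def UsedIn {n : ℕ} (L : Finset (Fin n × Fin n)) (i : Fin n) : Prop :=
  ∃ c ∈ L, c.1 = i ∨ c.2 = i

/-- A network is redundant if removing some comparator leaves the set of outputs unchanged. -/
def Redundant {n : ℕ} (N : List (Finset (Fin n × Fin n))) : Prop :=
  ∃ k, ∃ hk : k < N.length, ∃ c ∈ N.get ⟨k, hk⟩,
    outputs (N.set k ((N.get ⟨k, hk⟩).erase c)) = outputs N

/-- A two-layer network `L₁;L₂` is saturated if it is non-redundant and adding any
comparator to its last layer yields a network whose outputs are not a subset of the
original outputs. -/
def Saturated2 {n : ℕ} (L1 L2 : Finset (Fin n × Fin n)) : Prop :=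
  ¬ Redundant [L1, L2] ∧
  ∀ c : Fin n × Fin n, c ∉ L2 → IsLayer (insert c L2) →
    ¬ (outputs [L1, insert c L2] ⊆ outputs [L1, L2])


section Helpers
variable {n : ℕ}

lemma bool_min_eq : ∀ p q : Bool, (p && q) = ((p && q) && (p || q)) := by decide

lemma bool_max_eq : ∀ p q : Bool, (p || q) = ((p && q) || (p || q)) := by decide

lemma endpoint_unique {L : Finset (Fin n × Fin n)} (hL : IsLayer L)
    {c c' : Fin n × Fin n} (hc : c ∈ L) (hc' : c' ∈ L) {m : Fin n}
    (h : c.1 = m ∨ c.2 = m) (h' : c'.1 = m ∨ c'.2 = m) : c = c' := by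
  by_contra hne
  obtain ⟨e1, e2, e3, e4⟩ := hL.2 c hc c' hc' hne
  rcases h with h | h <;> rcases h' with h' | h' <;> simp_all

lemma mem_min {L : Finset (Fin n × Fin n)} (hL : IsLayer L)
    {k m : Fin n} (h : (k, m) ∈ L) (x : Fin n → Bool) :
    applyLayer L x k = (x k && x m) := by
  have h1 : ∃ j, (k, j) ∈ L := ⟨m, h⟩
  have hch : h1.choose = m := by
    have hs := h1.choose_spec
    have := endpoint_unique hL hs h (Or.inl rfl) (Or.inl rfl)
    exact (Prod.ext_iff.mp this).2
  simp only [applyLayer]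
  rw [dif_pos h1, hch]

lemma mem_max {L : Finset (Fin n × Fin n)} (hL : IsLayer L)
    {k m : Fin n} (h : (k, m) ∈ L) (x : Fin n → Bool) :
    applyLayer L x m = (x k || x m) := by
  have hkm : k < m := hL.1 _ h
  have hno : ¬ ∃ j, (m, j) ∈ L := by
    rintro ⟨j2, hj2⟩
    have := endpoint_unique hL hj2 h (Or.inl rfl) (Or.inr rfl)
    exact absurd (Prod.ext_iff.mp this).1 (ne_of_gt hkm)
  have h2 : ∃ i, (i, m) ∈ L := ⟨k, h⟩
  have hch : h2.choose = k := by
    have hs := h2.choose_spec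
    have := endpoint_unique hL hs h (Or.inr rfl) (Or.inr rfl)
    exact (Prod.ext_iff.mp this).1
  simp only [applyLayer]
  rw [dif_neg hno, dif_pos h2, hch]

lemma free_eq {L : Finset (Fin n × Fin n)} {k : Fin n} (h : ¬ UsedIn L k)
    (x : Fin n → Bool) : applyLayer L x k = x k := by
  have h1 : ¬ ∃ j, (k, j) ∈ L := by rintro ⟨m, hm⟩; exact h ⟨(k, m), hm, Or.inl rfl⟩
  have h2 : ¬ ∃ i, (i, k) ∈ L := by rintro ⟨m, hm⟩; exact h ⟨(m, k), hm, Or.inr rfl⟩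
  simp only [applyLayer]
  rw [dif_neg h1, dif_neg h2]

lemma applyLayer_pt {L : Finset (Fin n × Fin n)} (hL : IsLayer L)
    {v v' : Fin n → Bool} {k : Fin n} (hk : v' k = v k)
    (hp : ∀ m, ((k, m) ∈ L ∨ (m, k) ∈ L) → v' m = v m) :
    applyLayer L v' k = applyLayer L v k := by
  by_cases hA : ∃ m, (k, m) ∈ L
  · obtain ⟨m, hm⟩ := hA
    rw [mem_min hL hm, mem_min hL hm, hk, hp m (Or.inl hm)]
  · by_cases hB : ∃ m, (m, k) ∈ L
    · obtain ⟨m, hm⟩ := hB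
      rw [mem_max hL hm, mem_max hL hm, hk, hp m (Or.inr hm)]
    · have hfree : ¬ UsedIn L k := by
        rintro ⟨⟨p, q⟩, hc, hh | hh⟩ <;> simp only at hh <;> subst hh
        · exact hA ⟨q, hc⟩
        · exact hB ⟨p, hc⟩
      rw [free_eq hfree, free_eq hfree, hk]

lemma insert_isLayer {L2 : Finset (Fin n × Fin n)} (h2 : IsLayer L2) {i j : Fin n}
    (hij : i < j) (hi2 : ¬ UsedIn L2 i) (hj2 : ¬ UsedIn L2 j) :
    IsLayer (insert (i, j) L2) := by
  constructor
  · intro c hc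
    rcases Finset.mem_insert.mp hc with h | h
    · subst h; exact hij
    · exact h2.1 c h
  · intro c hc c' hc' hne
    rcases Finset.mem_insert.mp hc with h | h <;> rcases Finset.mem_insert.mp hc' with h' | h'
    · exact absurd (h.trans h'.symm) hne
    · subst h
      refine ⟨?_, ?_, ?_, ?_⟩ <;> intro he
      · exact hi2 ⟨c', h', Or.inl he.symm⟩
      · exact hi2 ⟨c', h', Or.inr he.symm⟩
      · exact hj2 ⟨c', h', Or.inl he.symm⟩
      · exact hj2 ⟨c', h', Or.inr he.symm⟩
    · subst h'
      refine ⟨?_, ?_, ?_, ?_⟩ <;> intro he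
      · exact hi2 ⟨c, h, Or.inl he⟩
      · exact hj2 ⟨c, h, Or.inl he⟩
      · exact hi2 ⟨c, h, Or.inr he⟩
      · exact hj2 ⟨c, h, Or.inr he⟩
    · exact h2.2 c h c' h' hne

lemma applyLayer_insert_eq {L2 : Finset (Fin n × Fin n)} (h2 : IsLayer L2) {i j : Fin n}
    (hij : i < j) (hi2 : ¬ UsedIn L2 i) (hj2 : ¬ UsedIn L2 j) (v : Fin n → Bool)
    {k : Fin n} (hki : k ≠ i) (hkj : k ≠ j) :
    applyLayer (insert (i, j) L2) v k = applyLayer L2 v k := by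
  have hlay := insert_isLayer h2 hij hi2 hj2
  by_cases hA : ∃ m, (k, m) ∈ L2
  · obtain ⟨m, hm⟩ := hA
    rw [mem_min hlay (Finset.mem_insert_of_mem hm) v, mem_min h2 hm v]
  · by_cases hB : ∃ m, (m, k) ∈ L2
    · obtain ⟨m, hm⟩ := hB
      rw [mem_max hlay (Finset.mem_insert_of_mem hm) v, mem_max h2 hm v]
    · have hf2 : ¬ UsedIn L2 k := by
        rintro ⟨⟨p, q⟩, hc, hh | hh⟩ <;> simp only at hh <;> subst hh
        · exact hA ⟨q, hc⟩
        · exact hB ⟨p, hc⟩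
      have hfi : ¬ UsedIn (insert (i, j) L2) k := by
        rintro ⟨c, hc, hh⟩
        rcases Finset.mem_insert.mp hc with rfl | hc'
        · rcases hh with hh | hh
          · exact hki hh.symm
          · exact hkj hh.symm
        · exact hf2 ⟨c, hc', hh⟩
      rw [free_eq hfi, free_eq hf2]

end Helpers

/-- pattern (1) of Theorem 1 of the paper.
If `i` is a min channel and `j` a max channel of the two-layer network `L₁;L₂`, `i < j`,
and both are unused in the second layer, then adding the comparator `(i,j)` to the second
layer does not enlarge the set of outputs; in particular `L₁;L₂` is not saturated. -/
theorem statement2 (n : ℕ) (L1 L2 : Finset (Fin n × Fin n))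
    (h1 : IsLayer L1) (h2 : IsLayer L2)
    (i j : Fin n) (hij : i < j)
    (hmin : ∃ j', (i, j') ∈ L1) (hmax : ∃ i', (i', j) ∈ L1)
    (hi2 : ¬ UsedIn L2 i) (hj2 : ¬ UsedIn L2 j) :
    outputs [L1, insert (i, j) L2] ⊆ outputs [L1, L2] ∧ ¬ Saturated2 L1 L2 := by
  obtain ⟨j', hj'⟩ := hmin
  obtain ⟨i', hi'⟩ := hmax
  have hlay : IsLayer (insert (i, j) L2) := insert_isLayer h2 hij hi2 hj2
  have hmem : (i, j) ∈ insert (i, j) L2 := Finset.mem_insert_self _ _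
  have key : outputs [L1, insert (i, j) L2] ⊆ outputs [L1, L2] := by
    rintro y ⟨x, rfl⟩
    by_cases hA : (i, j) ∈ L1
    · refine ⟨x, ?_⟩
      show applyLayer L2 (applyLayer L1 x) = applyLayer (insert (i, j) L2) (applyLayer L1 x)
      set v := applyLayer L1 x with hv
      have hvi : v i = (x i && x j) := mem_min h1 hA x
      have hvj : v j = (x i || x j) := mem_max h1 hA x
      funext k
      by_cases hki : k = i
      · subst hki
        rw [free_eq hi2, mem_min hlay hmem, hvi, hvj]
        exact bool_min_eq _ _
      · by_cases hkj : k = j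
        · subst hkj
          rw [free_eq hj2, mem_max hlay hmem, hvi, hvj]
          exact bool_max_eq _ _
        · exact (applyLayer_insert_eq h2 hij hi2 hj2 v hki hkj).symm
    · have hij' : i < j' := h1.1 _ hj'
      have hi'j : i' < j := h1.1 _ hi'
      have hne : (i, j') ≠ (i', j) := by
        intro h
        rw [Prod.mk.injEq] at h
        rw [h.2] at hj'
        exact hA hj'
      have hd := h1.2 _ hj' _ hi' hne
      have hii' : i ≠ i' := hd.1
      have hij2 : i ≠ j := hd.2.1
      have hj'i' : j' ≠ i' := hd.2.2.1
      have hj'j : j' ≠ j := hd.2.2.2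
      set x' : Fin n → Bool := fun k =>
        if k = i then (x i && x j') && (x i' || x j)
        else if k = j then (x i && x j') || (x i' || x j)
        else if k = j' then x i || x j'
        else if k = i' then x i' && x j
        else x k with hx'
      have hx'i : x' i = ((x i && x j') && (x i' || x j)) := by
        simp only [hx', if_pos]
      have hx'j : x' j = ((x i && x j') || (x i' || x j)) := by
        simp only [hx']
        rw [if_neg hij.ne']
        simp only [if_pos]
      have hx'j' : x' j' = (x i || x j') := by
        simp only [hx']
        rw [if_neg hij'.ne', if_neg hj'j]
        simp only [if_pos]
      have hx'i' : x' i' = (x i' && x j) := by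
        simp only [hx']
        rw [if_neg (Ne.symm hii'), if_neg hi'j.ne, if_neg (Ne.symm hj'i')]
        simp only [if_pos]
      have hx'other : ∀ m, m ≠ i → m ≠ j → m ≠ j' → m ≠ i' → x' m = x m := by
        intro m h1' h2' h3' h4'
        simp only [hx']; rw [if_neg h1', if_neg h2', if_neg h3', if_neg h4']
      set v := applyLayer L1 x with hv
      set v' := applyLayer L1 x' with hv'
      have hvi : v i = (x i && x j') := mem_min h1 hj' x
      have hvj : v j = (x i' || x j) := mem_max h1 hi' x
      have hvj' : v j' = (x i || x j') := mem_max h1 hj' x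
      have hvi' : v i' = (x i' && x j) := mem_min h1 hi' x
      have hv'i : v' i = ((x i && x j') && (x i' || x j)) := by
        rw [hv', mem_min h1 hj' x', hx'i, hx'j']
        cases x i <;> cases x j' <;> cases x i' <;> cases x j <;> rfl
      have hv'j : v' j = ((x i && x j') || (x i' || x j)) := by
        rw [hv', mem_max h1 hi' x', hx'i', hx'j]
        cases x i <;> cases x j' <;> cases x i' <;> cases x j <;> rfl
      have hv'j' : v' j' = v j' := by
        rw [hv', mem_max h1 hj' x', hx'i, hx'j', hvj']
        cases x i <;> cases x j' <;> cases x i' <;> cases x j <;> rfl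
      have hv'i' : v' i' = v i' := by
        rw [hv', mem_min h1 hi' x', hx'i', hx'j, hvi']
        cases x i <;> cases x j' <;> cases x i' <;> cases x j <;> rfl
      have hagree : ∀ m, m ≠ i → m ≠ j → v' m = v m := by
        intro m hmi hmj
        by_cases hmj' : m = j'
        · subst hmj'; exact hv'j'
        by_cases hmi' : m = i'
        · subst hmi'; exact hv'i'
        rw [hv', hv]
        apply applyLayer_pt h1 (hx'other m hmi hmj hmj' hmi')
        intro m2 hm2
        have hm2ne : m2 ≠ i ∧ m2 ≠ j ∧ m2 ≠ j' ∧ m2 ≠ i' := by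
          rcases hm2 with h | h
          · refine ⟨?_, ?_, ?_, ?_⟩ <;> intro he <;> subst he
            · exact hmi (Prod.ext_iff.mp
                (endpoint_unique h1 h hj' (Or.inr rfl) (Or.inl rfl))).1
            · exact hmi' (Prod.ext_iff.mp
                (endpoint_unique h1 h hi' (Or.inr rfl) (Or.inr rfl))).1
            · exact hmi (Prod.ext_iff.mp
                (endpoint_unique h1 h hj' (Or.inr rfl) (Or.inr rfl))).1
            · exact hmi' (Prod.ext_iff.mp
                (endpoint_unique h1 h hi' (Or.inr rfl) (Or.inl rfl))).1
          · refine ⟨?_, ?_, ?_, ?_⟩ <;> intro he <;> subst he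
            · exact hmj' (Prod.ext_iff.mp
                (endpoint_unique h1 h hj' (Or.inl rfl) (Or.inl rfl))).2
            · exact hi'j.ne (Prod.ext_iff.mp
                (endpoint_unique h1 h hi' (Or.inl rfl) (Or.inr rfl))).1.symm
            · exact hij'.ne' (Prod.ext_iff.mp
                (endpoint_unique h1 h hj' (Or.inl rfl) (Or.inr rfl))).1
            · exact hmj (Prod.ext_iff.mp
                (endpoint_unique h1 h hi' (Or.inl rfl) (Or.inl rfl))).2
        exact hx'other m2 hm2ne.1 hm2ne.2.1 hm2ne.2.2.1 hm2ne.2.2.2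
      refine ⟨x', ?_⟩
      show applyLayer L2 v' = applyLayer (insert (i, j) L2) v
      funext k
      by_cases hki : k = i
      · subst hki
        rw [free_eq hi2, mem_min hlay hmem, hv'i, hvi, hvj]
      · by_cases hkj : k = j
        · subst hkj
          rw [free_eq hj2, mem_max hlay hmem, hv'j, hvi, hvj]
        · rw [applyLayer_insert_eq h2 hij hi2 hj2 v hki hkj]
          apply applyLayer_pt h2 (hagree k hki hkj)
          intro m hm
          apply hagree
          · intro he
            rcases hm with h | h
            · exact hi2 ⟨(k, m), h, Or.inr he⟩
            · exact hi2 ⟨(m, k), h, Or.inl he⟩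
          · intro he
            rcases hm with h | h
            · exact hj2 ⟨(k, m), h, Or.inr he⟩
            · exact hj2 ⟨(m, k), h, Or.inl he⟩
  refine ⟨key, ?_⟩
  intro hsat
  have hnotin : (i, j) ∉ L2 := fun h => hi2 ⟨(i, j), h, Or.inl rfl⟩
  exact hsat.2 (i, j) hnotin hlay key
end

section
/- Let C = L_1;L_2 be a two-layer comparator network on n channels, let f be a channel unused in both layers, and let x ≠ f be a channel unused in the second layer L_2 such that one of the following holds: (a) x is also free (unused in L_1); (b) x is a max channel and f < x; (c) x is a min channel and x < f. Then the two-layer network C' obtained from C by adding to L_2 the comparator joining f and x (with the smaller-numbered of the two channels as its first component) satisfies outputs(C') ⊆ outputs(C); in particular, C is not saturated. (This is the content of patterns (2a), (2b), (2c) of Theorem 1 of the paper.) -/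
section AuxStatement3

variable {n : ℕ}

theorem usedIn_of_fst {L : Finset (Fin n × Fin n)} {a b : Fin n} (h : (a, b) ∈ L) :
    UsedIn L a := ⟨(a, b), h, Or.inl rfl⟩

theorem usedIn_of_snd {L : Finset (Fin n × Fin n)} {a b : Fin n} (h : (a, b) ∈ L) :
    UsedIn L b := ⟨(a, b), h, Or.inr rfl⟩

theorem layer_fst_unique {L : Finset (Fin n × Fin n)} (hL : IsLayer L)
    {a b b' : Fin n} (h : (a, b) ∈ L) (h' : (a, b') ∈ L) : b = b' := by
  by_contra hne
  exact (hL.2 _ h _ h' (fun hc => hne (congrArg Prod.snd hc))).1 rfl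

theorem layer_snd_unique {L : Finset (Fin n × Fin n)} (hL : IsLayer L)
    {a a' b : Fin n} (h : (a, b) ∈ L) (h' : (a', b) ∈ L) : a = a' := by
  by_contra hne
  exact (hL.2 _ h _ h' (fun hc => hne (congrArg Prod.fst hc))).2.2.2 rfl

theorem layer_not_fst_of_snd {L : Finset (Fin n × Fin n)} (hL : IsLayer L)
    {a b : Fin n} (h : (a, b) ∈ L) : ¬ ∃ j, (b, j) ∈ L := by
  rintro ⟨j, hj⟩
  by_cases he : ((a, b) : Fin n × Fin n) = (b, j)
  · have hab : a < b := hL.1 _ h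
    have : a = b := congrArg Prod.fst he
    exact absurd this hab.ne
  · exact (hL.2 _ h _ hj he).2.2.1 rfl

theorem layer_not_snd_of_fst {L : Finset (Fin n × Fin n)} (hL : IsLayer L)
    {a b : Fin n} (h : (a, b) ∈ L) : ¬ ∃ i, (i, a) ∈ L := by
  rintro ⟨i, hi⟩
  by_cases he : ((a, b) : Fin n × Fin n) = (i, a)
  · have hab : a < b := hL.1 _ h
    have : b = a := congrArg Prod.snd he
    exact absurd this.symm hab.ne
  · exact (hL.2 _ h _ hi he).2.1 rfl

theorem applyLayer_min {L : Finset (Fin n × Fin n)} (hL : IsLayer L)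
    {a b : Fin n} (h : (a, b) ∈ L) (v : Fin n → Bool) :
    applyLayer L v a = (v a && v b) := by
  have he : ∃ j, (a, j) ∈ L := ⟨b, h⟩
  unfold applyLayer
  rw [dif_pos he, layer_fst_unique hL he.choose_spec h]

theorem applyLayer_max {L : Finset (Fin n × Fin n)} (hL : IsLayer L)
    {a b : Fin n} (h : (a, b) ∈ L) (v : Fin n → Bool) :
    applyLayer L v b = (v a || v b) := by
  have hne : ¬ ∃ j, (b, j) ∈ L := layer_not_fst_of_snd hL h
  have he : ∃ i, (i, b) ∈ L := ⟨a, h⟩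
  unfold applyLayer
  rw [dif_neg hne, dif_pos he, layer_snd_unique hL he.choose_spec h]

theorem applyLayer_unused {L : Finset (Fin n × Fin n)} {k : Fin n}
    (h : ¬ UsedIn L k) (v : Fin n → Bool) : applyLayer L v k = v k := by
  have h1 : ¬ ∃ j, (k, j) ∈ L := fun ⟨j, hj⟩ => h (usedIn_of_fst hj)
  have h2 : ¬ ∃ i, (i, k) ∈ L := fun ⟨i, hi⟩ => h (usedIn_of_snd hi)
  unfold applyLayer
  rw [dif_neg h1, dif_neg h2]

theorem applyLayer_congr {L : Finset (Fin n × Fin n)} (v w : Fin n → Bool) (k : Fin n)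
    (hk : v k = w k)
    (hj : ∀ j, (k, j) ∈ L → v j = w j)
    (hi : ∀ i, (i, k) ∈ L → v i = w i) :
    applyLayer L v k = applyLayer L w k := by
  unfold applyLayer
  by_cases h : ∃ j, (k, j) ∈ L
  · rw [dif_pos h, dif_pos h, hk, hj _ h.choose_spec]
  · rw [dif_neg h, dif_neg h]
    by_cases h' : ∃ i, (i, k) ∈ L
    · rw [dif_pos h', dif_pos h', hk, hi _ h'.choose_spec]
    · rw [dif_neg h', dif_neg h', hk]

theorem isLayer_insert {L : Finset (Fin n × Fin n)} (hL : IsLayer L) {a b : Fin n}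
    (hab : a < b) (ha : ¬ UsedIn L a) (hb : ¬ UsedIn L b) :
    IsLayer (insert (a, b) L) := by
  constructor
  · intro c hc
    rcases Finset.mem_insert.mp hc with rfl | hc'
    · exact hab
    · exact hL.1 c hc'
  · intro c hc c' hc' hne
    rcases Finset.mem_insert.mp hc with rfl | hcL <;>
      rcases Finset.mem_insert.mp hc' with rfl | hcL'
    · exact absurd rfl hne
    · exact ⟨fun h => ha ⟨c', hcL', Or.inl h.symm⟩,
        fun h => ha ⟨c', hcL', Or.inr h.symm⟩,
        fun h => hb ⟨c', hcL', Or.inl h.symm⟩,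
        fun h => hb ⟨c', hcL', Or.inr h.symm⟩⟩
    · exact ⟨fun h => ha ⟨c, hcL, Or.inl h⟩,
        fun h => hb ⟨c, hcL, Or.inl h⟩,
        fun h => ha ⟨c, hcL, Or.inr h⟩,
        fun h => hb ⟨c, hcL, Or.inr h⟩⟩
    · exact hL.2 c hcL c' hcL' hne

theorem applyLayer_insert {L : Finset (Fin n × Fin n)} (hL : IsLayer L) {a b : Fin n}
    (hab : a < b) (ha : ¬ UsedIn L a) (hb : ¬ UsedIn L b) (v : Fin n → Bool) (k : Fin n) :
    applyLayer (insert (a, b) L) v k =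
      if k = a then v a && v b else if k = b then v a || v b
      else applyLayer L v k := by
  have hL' := isLayer_insert hL hab ha hb
  have hmem : (a, b) ∈ insert (a, b) L := Finset.mem_insert_self _ _
  by_cases hka : k = a
  · subst hka; rw [if_pos rfl]; exact applyLayer_min hL' hmem v
  rw [if_neg hka]
  by_cases hkb : k = b
  · subst hkb; rw [if_pos rfl]; exact applyLayer_max hL' hmem v
  rw [if_neg hkb]
  by_cases h1 : ∃ j, (k, j) ∈ L
  · obtain ⟨j, hj⟩ := h1
    rw [applyLayer_min hL hj v, applyLayer_min hL' (Finset.mem_insert_of_mem hj) v]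
  by_cases h2 : ∃ i, (i, k) ∈ L
  · obtain ⟨i, hi⟩ := h2
    rw [applyLayer_max hL hi v, applyLayer_max hL' (Finset.mem_insert_of_mem hi) v]
  have hk : ¬ UsedIn L k := by
    rintro ⟨⟨ca, cb⟩, hc, hor⟩
    rcases hor with rfl | rfl
    · exact h1 ⟨cb, hc⟩
    · exact h2 ⟨ca, hc⟩
  have hk' : ¬ UsedIn (insert (a, b) L) k := by
    rintro ⟨c, hc, hor⟩
    rcases Finset.mem_insert.mp hc with rfl | hcL
    · rcases hor with h | h
      · exact hka h.symm
      · exact hkb h.symm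
    · exact hk ⟨c, hcL, hor⟩
  rw [applyLayer_unused hk', applyLayer_unused hk]

/-- target vector after adding comparator `(a,b)` on top of the result of `L1`. -/
noncomputable def Htgt {n : ℕ} (L1 : Finset (Fin n × Fin n)) (a b : Fin n)
    (y : Fin n → Bool) (k : Fin n) : Bool :=
  if k = a then applyLayer L1 y a && applyLayer L1 y b
  else if k = b then applyLayer L1 y a || applyLayer L1 y b
  else applyLayer L1 y k

theorem H_triv {L1 : Finset (Fin n × Fin n)} {a b : Fin n} (y : Fin n → Bool)
    (htriv : ¬ (applyLayer L1 y a = true ∧ applyLayer L1 y b = false)) :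
    ∀ k, applyLayer L1 y k = Htgt L1 a b y k := by
  intro k
  unfold Htgt
  by_cases hka : k = a
  · rw [if_pos hka, hka]
    cases hA : applyLayer L1 y a <;> cases hB : applyLayer L1 y b <;> simp_all
  rw [if_neg hka]
  by_cases hkb : k = b
  · rw [if_pos hkb, hkb]
    cases hA : applyLayer L1 y a <;> cases hB : applyLayer L1 y b <;> simp_all
  rw [if_neg hkb]

theorem main_sub (L1 L2 : Finset (Fin n × Fin n)) (h2 : IsLayer L2)
    (a b : Fin n) (hab : a < b) (ha2 : ¬ UsedIn L2 a) (hb2 : ¬ UsedIn L2 b)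
    (H : ∀ y, ∃ y', ∀ k, applyLayer L1 y' k = Htgt L1 a b y k) :
    outputs [L1, insert (a, b) L2] ⊆ outputs [L1, L2] := by
  rintro z ⟨y, rfl⟩
  obtain ⟨y', hy'⟩ := H y
  refine ⟨y', ?_⟩
  show applyLayer L2 (applyLayer L1 y') = applyLayer (insert (a, b) L2) (applyLayer L1 y)
  funext k
  rw [applyLayer_insert h2 hab ha2 hb2]
  by_cases hka : k = a
  · rw [if_pos hka, hka, applyLayer_unused ha2, hy' a]
    unfold Htgt; rw [if_pos rfl]
  rw [if_neg hka]
  by_cases hkb : k = b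
  · rw [if_pos hkb, hkb, applyLayer_unused hb2, hy' b]
    unfold Htgt; rw [if_neg hab.ne', if_pos rfl]
  rw [if_neg hkb]
  refine applyLayer_congr _ _ k ?_ ?_ ?_
  · rw [hy' k]; unfold Htgt; rw [if_neg hka, if_neg hkb]
  · intro j hj
    have hja : j ≠ a := fun h => ha2 (by rw [← h]; exact usedIn_of_snd hj)
    have hjb : j ≠ b := fun h => hb2 (by rw [← h]; exact usedIn_of_snd hj)
    rw [hy' j]; unfold Htgt; rw [if_neg hja, if_neg hjb]
  · intro i hi
    have hia : i ≠ a := fun h => ha2 (by rw [← h]; exact usedIn_of_fst hi)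
    have hib : i ≠ b := fun h => hb2 (by rw [← h]; exact usedIn_of_fst hi)
    rw [hy' i]; unfold Htgt; rw [if_neg hia, if_neg hib]

end AuxStatement3

section CasesStatement3

variable {n : ℕ}

theorem H_case_a {L1 : Finset (Fin n × Fin n)} (h1 : IsLayer L1)
    {a b : Fin n} (hne : a ≠ b) (ha : ¬ UsedIn L1 a) (hb : ¬ UsedIn L1 b)
    (y : Fin n → Bool) :
    ∃ y', ∀ k, applyLayer L1 y' k = Htgt L1 a b y k := by
  by_cases htriv : applyLayer L1 y a = true ∧ applyLayer L1 y b = false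
  · have hva : applyLayer L1 y a = y a := applyLayer_unused ha y
    have hvb : applyLayer L1 y b = y b := applyLayer_unused hb y
    obtain ⟨hta, htb⟩ := htriv
    have hya : y a = true := hva.symm.trans hta
    have hyb : y b = false := hvb.symm.trans htb
    refine ⟨fun k => if k = a then y b else if k = b then y a else y k, fun k => ?_⟩
    unfold Htgt
    by_cases hka : k = a
    · rw [if_pos hka, hka, applyLayer_unused ha, hta, htb]
      simp [hyb]
    rw [if_neg hka]
    by_cases hkb : k = b
    · rw [if_pos hkb, hkb, applyLayer_unused hb, hta, htb]
      simp [hne.symm, hya]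
    rw [if_neg hkb]
    refine applyLayer_congr _ _ k (by simp [hka, hkb]) ?_ ?_
    · intro j hj
      have hja : j ≠ a := fun h => ha (by rw [← h]; exact usedIn_of_snd hj)
      have hjb : j ≠ b := fun h => hb (by rw [← h]; exact usedIn_of_snd hj)
      simp [hja, hjb]
    · intro i hi
      have hia : i ≠ a := fun h => ha (by rw [← h]; exact usedIn_of_fst hi)
      have hib : i ≠ b := fun h => hb (by rw [← h]; exact usedIn_of_fst hi)
      simp [hia, hib]
  · exact ⟨y, H_triv y htriv⟩

theorem H_case_b {L1 : Finset (Fin n × Fin n)} (h1 : IsLayer L1)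
    {f x i : Fin n} (hf : ¬ UsedIn L1 f) (hix : (i, x) ∈ L1) (y : Fin n → Bool) :
    ∃ y', ∀ k, applyLayer L1 y' k = Htgt L1 f x y k := by
  by_cases htriv : applyLayer L1 y f = true ∧ applyLayer L1 y x = false
  · have hif : i ≠ f := fun h => hf (by rw [← h]; exact usedIn_of_fst hix)
    have hxf : x ≠ f := fun h => hf (by rw [← h]; exact usedIn_of_snd hix)
    have hixne : i ≠ x := (h1.1 _ hix).ne
    have hvf : applyLayer L1 y f = y f := applyLayer_unused hf y
    have hvx : applyLayer L1 y x = (y i || y x) := applyLayer_max h1 hix y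
    have hvi : applyLayer L1 y i = (y i && y x) := applyLayer_min h1 hix y
    obtain ⟨hta, htb⟩ := htriv
    have hyf : y f = true := hvf.symm.trans hta
    have hyix : (y i || y x) = false := hvx.symm.trans htb
    have hyi : y i = false := (Bool.or_eq_false_iff.mp hyix).1
    have hyx : y x = false := (Bool.or_eq_false_iff.mp hyix).2
    refine ⟨fun k => if k = f then y x else if k = x then y f else y k, fun k => ?_⟩
    have hy'f : (if f = f then y x else if f = x then y f else y f) = y x := by simp
    have hy'x : (if x = f then y x else if x = x then y f else y x) = y f := by
      simp [hxf]
    have hy'i : (if i = f then y x else if i = x then y f else y i) = y i := by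
      simp [hif, hixne]
    unfold Htgt
    by_cases hkf : k = f
    · rw [if_pos hkf, hkf, applyLayer_unused hf, hta, htb]
      simp [hyx]
    rw [if_neg hkf]
    by_cases hkx : k = x
    · rw [if_pos hkx, hkx, applyLayer_max h1 hix, hta, htb]
      simp [hif, hixne, hxf, hyi, hyf]
    rw [if_neg hkx]
    by_cases hki : k = i
    · rw [hki, applyLayer_min h1 hix, hvi]
      simp [hif, hixne, hxf, hyi, hyf, hyx]
    refine applyLayer_congr _ _ k (by simp [hkf, hkx]) ?_ ?_
    · intro j hj
      have hjf : j ≠ f := fun h => hf (by rw [← h]; exact usedIn_of_snd hj)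
      have hjx : j ≠ x := fun h => hki (layer_snd_unique h1 (h ▸ hj) hix)
      simp [hjf, hjx]
    · intro i' hi'
      have h1f : i' ≠ f := fun h => hf (by rw [← h]; exact usedIn_of_fst hi')
      have h1x : i' ≠ x := fun h => layer_not_fst_of_snd h1 hix ⟨k, h ▸ hi'⟩
      simp [h1f, h1x]
  · exact ⟨y, H_triv y htriv⟩

theorem H_case_c {L1 : Finset (Fin n × Fin n)} (h1 : IsLayer L1)
    {f x j : Fin n} (hf : ¬ UsedIn L1 f) (hxj : (x, j) ∈ L1) (y : Fin n → Bool) :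
    ∃ y', ∀ k, applyLayer L1 y' k = Htgt L1 x f y k := by
  by_cases htriv : applyLayer L1 y x = true ∧ applyLayer L1 y f = false
  · have hjf : j ≠ f := fun h => hf (by rw [← h]; exact usedIn_of_snd hxj)
    have hxf : x ≠ f := fun h => hf (by rw [← h]; exact usedIn_of_fst hxj)
    have hxjne : x ≠ j := (h1.1 _ hxj).ne
    have hvf : applyLayer L1 y f = y f := applyLayer_unused hf y
    have hvx : applyLayer L1 y x = (y x && y j) := applyLayer_min h1 hxj y
    have hvj : applyLayer L1 y j = (y x || y j) := applyLayer_max h1 hxj y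
    obtain ⟨hta, htb⟩ := htriv
    have hyf : y f = false := hvf.symm.trans htb
    have hyxj : (y x && y j) = true := hvx.symm.trans hta
    have hyx : y x = true := (Bool.and_eq_true_iff.mp hyxj).1
    have hyj : y j = true := (Bool.and_eq_true_iff.mp hyxj).2
    refine ⟨fun k => if k = f then y x else if k = x then y f else y k, fun k => ?_⟩
    have hy'f : (if f = f then y x else if f = x then y f else y f) = y x := by simp
    have hy'x : (if x = f then y x else if x = x then y f else y x) = y f := by
      simp [hxf]
    have hy'j : (if j = f then y x else if j = x then y f else y j) = y j := by
      simp [hjf, hxjne.symm]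
    unfold Htgt
    by_cases hkx : k = x
    · rw [if_pos hkx, hkx, applyLayer_min h1 hxj, hta, htb]
      simp [hxf, hjf, hxjne, hyf, hyj]
    rw [if_neg hkx]
    by_cases hkf : k = f
    · rw [if_pos hkf, hkf, applyLayer_unused hf, hta, htb]
      simp [hyx]
    rw [if_neg hkf]
    by_cases hkj : k = j
    · rw [hkj, applyLayer_max h1 hxj, hvj]
      simp [hxf, hjf, Ne.symm hxjne, hyf, hyx, hyj]
    refine applyLayer_congr _ _ k (by simp [hkf, hkx]) ?_ ?_
    · intro j' hj'
      have h1f : j' ≠ f := fun h => hf (by rw [← h]; exact usedIn_of_snd hj')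
      have h1x : j' ≠ x := fun h => layer_not_snd_of_fst h1 hxj ⟨k, h ▸ hj'⟩
      simp [h1f, h1x]
    · intro i' hi'
      have h1f : i' ≠ f := fun h => hf (by rw [← h]; exact usedIn_of_fst hi')
      have h1x : i' ≠ x := fun h => hkj (layer_fst_unique h1 (h ▸ hi') hxj)
      simp [h1f, h1x]
  · exact ⟨y, H_triv y htriv⟩

end CasesStatement3

/-- patterns (2a), (2b), (2c) of Theorem 1 of the paper.
Let `f` be a channel unused in both layers and `x ≠ f` a channel unused in the second
layer such that (a) `x` is free, or (b) `x` is a max channel and `f < x`, or (c) `x` is a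
min channel and `x < f`.  Then adding the comparator joining `f` and `x` (smaller channel
first) to the second layer does not enlarge the set of outputs; in particular `L₁;L₂` is
not saturated. -/
theorem statement3 (n : ℕ) (L1 L2 : Finset (Fin n × Fin n))
    (h1 : IsLayer L1) (h2 : IsLayer L2)
    (f x : Fin n) (hfx : f ≠ x)
    (hf1 : ¬ UsedIn L1 f) (hf2 : ¬ UsedIn L2 f) (hx2 : ¬ UsedIn L2 x)
    (hcase : (¬ UsedIn L1 x) ∨
             ((∃ i, (i, x) ∈ L1) ∧ f < x) ∨
             ((∃ j, (x, j) ∈ L1) ∧ x < f)) :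
    outputs [L1, insert (if f < x then (f, x) else (x, f)) L2] ⊆ outputs [L1, L2] ∧
    ¬ Saturated2 L1 L2 := by
  have key : ∃ a b : Fin n, a < b ∧
      (if f < x then ((f, x) : Fin n × Fin n) else (x, f)) = (a, b) ∧
      (¬ UsedIn L2 a) ∧ (¬ UsedIn L2 b) ∧
      (∀ y, ∃ y', ∀ k, applyLayer L1 y' k = Htgt L1 a b y k) := by
    rcases hcase with hxfree | ⟨⟨i, hix⟩, hlt⟩ | ⟨⟨j, hxj⟩, hlt⟩
    · rcases hfx.lt_or_gt with hlt | hlt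
      · exact ⟨f, x, hlt, if_pos hlt, hf2, hx2, fun y => H_case_a h1 hfx hf1 hxfree y⟩
      · exact ⟨x, f, hlt, if_neg (not_lt.mpr hlt.le), hx2, hf2,
          fun y => H_case_a h1 hfx.symm hxfree hf1 y⟩
    · exact ⟨f, x, hlt, if_pos hlt, hf2, hx2, fun y => H_case_b h1 hf1 hix y⟩
    · exact ⟨x, f, hlt, if_neg (not_lt.mpr hlt.le), hx2, hf2,
        fun y => H_case_c h1 hf1 hxj y⟩
  obtain ⟨a, b, hab, hceq, ha2, hb2, hH⟩ := key
  rw [hceq]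
  have hsub := main_sub L1 L2 h2 a b hab ha2 hb2 hH
  refine ⟨hsub, ?_⟩
  rintro ⟨-, hsat⟩
  have hnotin : (a, b) ∉ L2 := fun h => ha2 (usedIn_of_fst h)
  exact hsat (a, b) hnotin (isLayer_insert h2 hab ha2 hb2) hsub
end

section
/- For every n ≥ 3, the number of equivalence classes (under the equivalence ≈) of redundant two-layer comparator networks on n channels with first layer F_n equals |R(G_{n−2})|, the number of equivalence classes of all two-layer comparator networks on n−2 channels with first layer F_{n−2}. -/
/-- The unordered pair `{i,j}` is the channel pair of a comparator of `L`. -/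
def PairIn {n : ℕ} (L : Finset (Fin n × Fin n)) (i j : Fin n) : Prop :=
  (i, j) ∈ L ∨ (j, i) ∈ L

/-- Equivalence of two-layer networks: a permutation of the channels matching the
channel pairs of the comparators, layer by layer (the paper's equivalence `≈`,
via untangling of generalized networks). -/
def NetEquiv2 {n : ℕ} (A B : Finset (Fin n × Fin n) × Finset (Fin n × Fin n)) : Prop :=
  ∃ π : Equiv.Perm (Fin n),
    (∀ i j, PairIn A.1 i j ↔ PairIn B.1 (π i) (π j)) ∧
    (∀ i j, PairIn A.2 i j ↔ PairIn B.2 (π i) (π j))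


namespace S8

variable {n : ℕ}

lemma fst_unique {L : Finset (Fin n × Fin n)} (hL : IsLayer L) {a b c : Fin n}
    (h1 : (a,b) ∈ L) (h2 : (a,c) ∈ L) : b = c := by
  by_contra hbc
  have hne : ((a,b) : Fin n × Fin n) ≠ (a,c) := by simp [hbc]
  exact (hL.2 _ h1 _ h2 hne).1 rfl

lemma snd_unique {L : Finset (Fin n × Fin n)} (hL : IsLayer L) {a b c : Fin n}
    (h1 : (b,a) ∈ L) (h2 : (c,a) ∈ L) : b = c := by
  by_contra hbc
  have hne : ((b,a) : Fin n × Fin n) ≠ (c,a) := by simp [hbc]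
  exact (hL.2 _ h1 _ h2 hne).2.2.2 rfl

lemma not_snd {L : Finset (Fin n × Fin n)} (hL : IsLayer L) {a b : Fin n}
    (h1 : (a,b) ∈ L) : ∀ i, (i,a) ∉ L := by
  intro i hi
  have hia : i < a := hL.1 _ hi
  have hne : ((i,a) : Fin n × Fin n) ≠ (a,b) := by
    intro h
    rw [Prod.ext_iff] at h
    exact absurd h.1 (ne_of_lt hia)
  exact (hL.2 _ hi _ h1 hne).2.2.1 rfl

lemma not_fst {L : Finset (Fin n × Fin n)} (hL : IsLayer L) {a b : Fin n}
    (h1 : (a,b) ∈ L) : ∀ j, (b,j) ∉ L := by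
  intro j hj
  have hab : a < b := hL.1 _ h1
  have hne : ((b,j) : Fin n × Fin n) ≠ (a,b) := by
    intro h
    rw [Prod.ext_iff] at h
    exact absurd h.1.symm (ne_of_lt hab)
  exact (hL.2 _ hj _ h1 hne).2.1 rfl

lemma applyLayer_fst {L : Finset (Fin n × Fin n)} (hL : IsLayer L) {a b : Fin n}
    (hab : (a,b) ∈ L) (x : Fin n → Bool) : applyLayer L x a = (x a && x b) := by
  have hex : ∃ j, (a, j) ∈ L := ⟨b, hab⟩
  unfold applyLayer
  rw [dif_pos hex, fst_unique hL hex.choose_spec hab]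

lemma applyLayer_snd {L : Finset (Fin n × Fin n)} (hL : IsLayer L) {a b : Fin n}
    (hab : (a,b) ∈ L) (x : Fin n → Bool) : applyLayer L x b = (x a || x b) := by
  have hno : ¬ ∃ j, (b, j) ∈ L := by rintro ⟨j, hj⟩; exact not_fst hL hab j hj
  have hex : ∃ i, (i, b) ∈ L := ⟨a, hab⟩
  unfold applyLayer
  rw [dif_neg hno, dif_pos hex, snd_unique hL hex.choose_spec hab]

lemma applyLayer_unused {L : Finset (Fin n × Fin n)} {k : Fin n}
    (h1 : ∀ j, (k,j) ∉ L) (h2 : ∀ i, (i,k) ∉ L) (x : Fin n → Bool) :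
    applyLayer L x k = x k := by
  unfold applyLayer
  rw [dif_neg (by rintro ⟨j,hj⟩; exact h1 j hj), dif_neg (by rintro ⟨i,hi⟩; exact h2 i hi)]

lemma mem_Fn {c : Fin n × Fin n} : c ∈ Fn n ↔ (c.1.val % 2 = 0 ∧ c.2.val = c.1.val + 1) := by
  simp [Fn]

lemma isLayer_Fn : IsLayer (Fn n) := by
  constructor
  · rintro ⟨i,j⟩ hc
    rw [mem_Fn] at hc
    exact Fin.lt_def.mpr (by omega)
  · rintro ⟨i,j⟩ hc ⟨i',j'⟩ hc' hne
    rw [mem_Fn] at hc hc'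
    dsimp only at hc hc'
    obtain ⟨h1, h2⟩ := hc
    obtain ⟨h1', h2'⟩ := hc'
    have key : ¬ (i.val = i'.val) := by
      intro h
      exact hne (by rw [Prod.ext_iff]; dsimp only; exact ⟨Fin.ext h, Fin.ext (by omega)⟩)
    refine ⟨?_, ?_, ?_, ?_⟩ <;>
      · dsimp only
        intro h
        have hv := congrArg Fin.val h
        omega

lemma isLayer_subset {L L' : Finset (Fin n × Fin n)} (h : L' ⊆ L) (hL : IsLayer L) :
    IsLayer L' :=
  ⟨fun c hc => hL.1 c (h hc), fun c hc c' hc' hne => hL.2 c (h hc) c' (h hc') hne⟩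

lemma applyNet_two (L1 L2 : Finset (Fin n × Fin n)) (x : Fin n → Bool) :
    applyNet [L1, L2] x = applyLayer L2 (applyLayer L1 x) := rfl


lemma dup_applyNet_eq {L : Finset (Fin n × Fin n)} (hL : IsLayer L) {A B : Fin n}
    (hc : (A, B) ∈ L) (hF : (A, B) ∈ Fn n) :
    applyNet [Fn n, L.erase (A,B)] = applyNet [Fn n, L] := by
  funext x k
  rw [applyNet_two, applyNet_two]
  set w := applyLayer (Fn n) x with hw
  have hwA : w A = (x A && x B) := applyLayer_fst isLayer_Fn hF x
  have hwB : w B = (x A || x B) := applyLayer_snd isLayer_Fn hF x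
  have hsub : L.erase (A,B) ⊆ L := Finset.erase_subset _ _
  have hL' : IsLayer (L.erase (A,B)) := isLayer_subset hsub hL
  by_cases hkA : k = A
  · subst hkA
    have h1 : ∀ j, (k, j) ∉ L.erase (k,B) := by
      intro j hj
      have hjL : (k, j) ∈ L := hsub hj
      have : j = B := fst_unique hL hjL hc
      subst this
      exact (Finset.ne_of_mem_erase hj) rfl
    have h2 : ∀ i, (i, k) ∉ L.erase (k,B) := fun i hi => not_snd hL hc i (hsub hi)
    rw [applyLayer_unused h1 h2, applyLayer_fst hL hc, hwA, hwB]
    cases x k <;> cases x B <;> rfl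
  · by_cases hkB : k = B
    · subst hkB
      have h1 : ∀ j, (k, j) ∉ L.erase (A,k) := fun j hj => not_fst hL hc j (hsub hj)
      have h2 : ∀ i, (i, k) ∉ L.erase (A,k) := by
        intro i hi
        have hiL : (i, k) ∈ L := hsub hi
        have : i = A := snd_unique hL hiL hc
        subst this
        exact (Finset.ne_of_mem_erase hi) rfl
      rw [applyLayer_unused h1 h2, applyLayer_snd hL hc, hwA, hwB]
      cases x A <;> cases x k <;> rfl
    · by_cases hex : ∃ j, (k, j) ∈ L
      · obtain ⟨p, hp⟩ := hex
        have hpe : (k, p) ∈ L.erase (A,B) := by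
          refine Finset.mem_erase.mpr ⟨?_, hp⟩
          intro h
          rw [Prod.ext_iff] at h
          exact hkA h.1
        rw [applyLayer_fst hL' hpe, applyLayer_fst hL hp]
      · by_cases hex' : ∃ i, (i, k) ∈ L
        · obtain ⟨q, hq⟩ := hex'
          have hqe : (q, k) ∈ L.erase (A,B) := by
            refine Finset.mem_erase.mpr ⟨?_, hq⟩
            intro h
            rw [Prod.ext_iff] at h
            exact hkB h.2
          rw [applyLayer_snd hL' hqe, applyLayer_snd hL hq]
        · have h1 : ∀ j, (k, j) ∉ L := fun j hj => hex ⟨j, hj⟩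
          have h2 : ∀ i, (i, k) ∉ L := fun i hi => hex' ⟨i, hi⟩
          rw [applyLayer_unused (fun j hj => h1 j (hsub hj)) (fun i hi => h2 i (hsub hi)),
            applyLayer_unused h1 h2]

lemma redundant_of_dup {L : Finset (Fin n × Fin n)} (hL : IsLayer L) {A B : Fin n}
    (hc : (A, B) ∈ L) (hF : (A, B) ∈ Fn n) : Redundant [Fn n, L] := by
  refine ⟨1, by simp, (A,B), hc, ?_⟩
  show outputs [Fn n, L.erase (A,B)] = outputs [Fn n, L]
  unfold outputs
  rw [dup_applyNet_eq hL hc hF]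


lemma distinct_channels {L : Finset (Fin n × Fin n)} (hL : IsLayer L) {a b a' b' : Fin n}
    (h1 : (a,b) ∈ L) (h2 : (a',b') ∈ L) (hne : a.val ≠ a'.val) :
    a.val ≠ b'.val ∧ b.val ≠ a'.val ∧ b.val ≠ b'.val := by
  have hne' : ((a,b) : Fin n × Fin n) ≠ (a',b') := by
    intro h
    rw [Prod.ext_iff] at h
    exact hne (congrArg Fin.val h.1)
  have hd := hL.2 _ h1 _ h2 hne'
  exact ⟨fun h => hd.2.1 (Fin.ext h), fun h => hd.2.2.1 (Fin.ext h),
    fun h => hd.2.2.2 (Fin.ext h)⟩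

lemma FnLike_true {M : Finset (Fin n × Fin n)} (hM : M ⊆ Fn n) (x : Fin n → Bool) (k : Fin n)
    (h1 : x k = true) (h2 : k.val % 2 = 0 → ∀ j : Fin n, j.val = k.val + 1 → x j = true) :
    applyLayer M x k = true := by
  have hMl := isLayer_subset hM isLayer_Fn
  by_cases he : ∃ j, (k,j) ∈ M
  · obtain ⟨j, hj⟩ := he
    have hjF := mem_Fn.mp (hM hj)
    rw [applyLayer_fst hMl hj, h1, h2 hjF.1 j hjF.2]
    rfl
  · by_cases he' : ∃ i, (i,k) ∈ M
    · obtain ⟨i, hi⟩ := he'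
      rw [applyLayer_snd hMl hi, h1, Bool.or_true]
    · rw [applyLayer_unused (fun j hj => he ⟨j,hj⟩) (fun i hi => he' ⟨i,hi⟩), h1]

lemma FnLike_false {M : Finset (Fin n × Fin n)} (hM : M ⊆ Fn n) (x : Fin n → Bool) (k : Fin n)
    (h1 : x k = false) (h2 : k.val % 2 = 1 → ∀ i : Fin n, i.val + 1 = k.val → x i = false) :
    applyLayer M x k = false := by
  have hMl := isLayer_subset hM isLayer_Fn
  by_cases he : ∃ j, (k,j) ∈ M
  · obtain ⟨j, hj⟩ := he
    rw [applyLayer_fst hMl hj, h1, Bool.false_and]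
  · by_cases he' : ∃ i, (i,k) ∈ M
    · obtain ⟨i, hi⟩ := he'
      have hiF := mem_Fn.mp (hM hi)
      have hk1 : k.val % 2 = 1 := by
        have e1 : i.val % 2 = 0 := hiF.1
        have e2 : k.val = i.val + 1 := hiF.2
        omega
      have hik : i.val + 1 = k.val := hiF.2.symm
      rw [applyLayer_snd hMl hi, h1, h2 hk1 i hik, Bool.or_false]
    · rw [applyLayer_unused (fun j hj => he ⟨j,hj⟩) (fun i hi => he' ⟨i,hi⟩), h1]

lemma applyLayer_Fnerase_A {A B : Fin n} (hF : (A,B) ∈ Fn n) (x : Fin n → Bool) :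
    applyLayer ((Fn n).erase (A,B)) x A = x A := by
  obtain ⟨h1, h2⟩ := mem_Fn.mp hF
  refine applyLayer_unused ?_ ?_ x
  · intro j hj
    obtain ⟨hne, hjF⟩ := Finset.mem_erase.mp hj
    obtain ⟨-, hj2⟩ := mem_Fn.mp hjF
    apply hne
    have : j = B := Fin.ext (by dsimp only at hj2 h2 ⊢; omega)
    rw [this]
  · intro i hi
    obtain ⟨-, hiF⟩ := Finset.mem_erase.mp hi
    obtain ⟨hi1, hi2⟩ := mem_Fn.mp hiF
    dsimp only at hi1 hi2 h1
    omega

lemma applyLayer_Fnerase_B {A B : Fin n} (hF : (A,B) ∈ Fn n) (x : Fin n → Bool) :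
    applyLayer ((Fn n).erase (A,B)) x B = x B := by
  obtain ⟨h1, h2⟩ := mem_Fn.mp hF
  dsimp only at h1 h2
  refine applyLayer_unused ?_ ?_ x
  · intro j hj
    obtain ⟨-, hjF⟩ := Finset.mem_erase.mp hj
    obtain ⟨hj1, -⟩ := mem_Fn.mp hjF
    dsimp only at hj1
    omega
  · intro i hi
    obtain ⟨hne, hiF⟩ := Finset.mem_erase.mp hi
    obtain ⟨hi1, hi2⟩ := mem_Fn.mp hiF
    dsimp only at hi1 hi2
    apply hne
    have : i = A := Fin.ext (by omega)
    rw [this]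

lemma Fn_sorted {A B : Fin n} (hF : (A,B) ∈ Fn n) (z : Fin n → Bool)
    (h : applyLayer (Fn n) z A = true) : applyLayer (Fn n) z B = true := by
  rw [applyLayer_fst isLayer_Fn hF, Bool.and_eq_true] at h
  rw [applyLayer_snd isLayer_Fn hF, h.1, Bool.true_or]

lemma contra_helper {N N' : List (Finset (Fin n × Fin n))} (hout : outputs N' = outputs N)
    {u v : Fin n} (hforced : ∀ z, applyNet N z u = true → applyNet N z v = true)
    (x : Fin n → Bool) (h1 : applyNet N' x u = true) (h2 : applyNet N' x v = false) : False := by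
  have hmem : applyNet N' x ∈ outputs N := hout ▸ Set.mem_range_self x
  obtain ⟨z, hz⟩ := hmem
  have := hforced z (by rw [hz]; exact h1)
  rw [hz, h2] at this
  exact Bool.false_ne_true this

lemma applyLayer_erase_self_fst {L : Finset (Fin n × Fin n)} (hL : IsLayer L) {A B : Fin n}
    (hc : (A,B) ∈ L) (w : Fin n → Bool) : applyLayer (L.erase (A,B)) w A = w A := by
  have hsub : L.erase (A,B) ⊆ L := Finset.erase_subset _ _
  refine applyLayer_unused ?_ (fun i hi => not_snd hL hc i (hsub hi)) w
  intro j hj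
  have hjL : (A, j) ∈ L := hsub hj
  have : j = B := fst_unique hL hjL hc
  subst this
  exact (Finset.ne_of_mem_erase hj) rfl

lemma applyLayer_erase_self_snd {L : Finset (Fin n × Fin n)} (hL : IsLayer L) {A B : Fin n}
    (hc : (A,B) ∈ L) (w : Fin n → Bool) : applyLayer (L.erase (A,B)) w B = w B := by
  have hsub : L.erase (A,B) ⊆ L := Finset.erase_subset _ _
  refine applyLayer_unused (fun j hj => not_fst hL hc j (hsub hj)) ?_ w
  intro i hi
  have hiL : (i, B) ∈ L := hsub hi
  have : i = A := snd_unique hL hiL hc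
  subst this
  exact (Finset.ne_of_mem_erase hi) rfl


lemma nonredundant_of_nodup {L : Finset (Fin n × Fin n)} (hL : IsLayer L)
    (hno : ∀ c ∈ L, c ∉ Fn n) : ¬ Redundant [Fn n, L] := by
  rintro ⟨k, hk, c, hcmem, hout⟩
  have hk2 : k < 2 := hk
  obtain ⟨A, B⟩ := c
  interval_cases k
  · -- removing a comparator from the first layer Fn
    have hF : (A,B) ∈ Fn n := hcmem
    have hout' : outputs [(Fn n).erase (A,B), L] = outputs [Fn n, L] := hout
    obtain ⟨hA2, hBv⟩ := mem_Fn.mp hF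
    dsimp only at hA2 hBv
    by_cases heAp : ∃ p, (A, p) ∈ L
    · obtain ⟨p, hpA⟩ := heAp
      have hApv : A.val < p.val := Fin.lt_def.mp (hL.1 _ hpA)
      have hpBv : p.val ≠ B.val := fun h => hno _ hpA (mem_Fn.mpr ⟨hA2, show p.val = A.val + 1 by omega⟩)
      set x : Fin n → Bool := fun t =>
        decide (t.val = A.val ∨ t.val = p.val ∨ (p.val % 2 = 0 ∧ t.val = p.val + 1)) with hx
      have hxA : applyLayer ((Fn n).erase (A,B)) x A = true := by
        rw [applyLayer_Fnerase_A hF]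
        simp only [hx]
        rw [decide_eq_true_eq]
        exact Or.inl trivial
      have hxp : applyLayer ((Fn n).erase (A,B)) x p = true :=
        FnLike_true (Finset.erase_subset _ _) x p
          (by simp only [hx]; rw [decide_eq_true_eq]; exact Or.inr (Or.inl trivial))
          (by intro hpar j hj; simp only [hx]; rw [decide_eq_true_eq]; omega)
      have hxB : applyLayer ((Fn n).erase (A,B)) x B = false := by
        rw [applyLayer_Fnerase_B hF]
        simp only [hx]; rw [decide_eq_false_iff_not]
        omega
      have hu1 : applyNet [(Fn n).erase (A,B), L] x A = true := by
        rw [applyNet_two, applyLayer_fst hL hpA, hxA, hxp]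
        rfl
      have hforce : ∀ z, applyNet [Fn n, L] z A = true →
          applyLayer (Fn n) z A = true ∧ applyLayer (Fn n) z p = true := by
        intro z hz
        rw [applyNet_two, applyLayer_fst hL hpA, Bool.and_eq_true] at hz
        exact hz
      by_cases heBr : ∃ r, (B, r) ∈ L
      · obtain ⟨r, hBr⟩ := heBr
        have hBrv : B.val < r.val := Fin.lt_def.mp (hL.1 _ hBr)
        obtain ⟨hAr, hpB, hpr⟩ := distinct_channels hL hpA hBr (by omega)
        by_cases hbad : p.val % 2 = 0 ∧ r.val = p.val + 1
        · -- bad case: v = B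
          refine contra_helper hout' (u := A) (v := B) ?_ x hu1 ?_
          · intro z hz
            obtain ⟨hzA, hzp⟩ := hforce z hz
            have hwB := Fn_sorted hF z hzA
            have hwr := Fn_sorted (mem_Fn.mpr ⟨hbad.1, hbad.2⟩) z hzp
            rw [applyNet_two, applyLayer_fst hL hBr, hwB, hwr]
            rfl
          · rw [applyNet_two, applyLayer_fst hL hBr, hxB, Bool.false_and]
        · -- good case: v = r
          refine contra_helper hout' (u := A) (v := r) ?_ x hu1 ?_
          · intro z hz
            obtain ⟨hzA, hzp⟩ := hforce z hz
            have hwB := Fn_sorted hF z hzA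
            rw [applyNet_two, applyLayer_snd hL hBr, hwB, Bool.true_or]
          · rw [applyNet_two, applyLayer_snd hL hBr, hxB]
            have hxr : applyLayer ((Fn n).erase (A,B)) x r = false :=
              FnLike_false (Finset.erase_subset _ _) x r
                (by simp only [hx]; rw [decide_eq_false_iff_not]; omega)
                (by intro hpar i hi; simp only [hx]; rw [decide_eq_false_iff_not]; omega)
            rw [hxr]
            rfl
      · by_cases heBs : ∃ s, (s, B) ∈ L
        · obtain ⟨s, hsB⟩ := heBs
          have hsBv : s.val < B.val := Fin.lt_def.mp (hL.1 _ hsB)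
          have hsAv : s.val ≠ A.val := by
            intro h
            exact hno _ ((Fin.ext h : s = A) ▸ hsB) hF
          obtain ⟨hAB2, hps, hpB2⟩ := distinct_channels hL hpA hsB (fun h => hsAv h.symm)
          refine contra_helper hout' (u := A) (v := B) ?_ x hu1 ?_
          · intro z hz
            obtain ⟨hzA, hzp⟩ := hforce z hz
            have hwB := Fn_sorted hF z hzA
            rw [applyNet_two, applyLayer_snd hL hsB, hwB, Bool.or_true]
          · rw [applyNet_two, applyLayer_snd hL hsB, hxB]
            have hxs : applyLayer ((Fn n).erase (A,B)) x s = false :=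
              FnLike_false (Finset.erase_subset _ _) x s
                (by simp only [hx]; rw [decide_eq_false_iff_not]; omega)
                (by intro hpar i hi; simp only [hx]; rw [decide_eq_false_iff_not]; omega)
            rw [hxs]
            rfl
        · -- B unused in L
          have hB1 : ∀ j, (B,j) ∉ L := fun j hj => heBr ⟨j, hj⟩
          have hB2 : ∀ i, (i,B) ∉ L := fun i hi => heBs ⟨i, hi⟩
          refine contra_helper hout' (u := A) (v := B) ?_ x hu1 ?_
          · intro z hz
            obtain ⟨hzA, hzp⟩ := hforce z hz
            have hwB := Fn_sorted hF z hzA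
            rw [applyNet_two, applyLayer_unused hB1 hB2]
            exact hwB
          · rw [applyNet_two, applyLayer_unused hB1 hB2]
            exact hxB
    · by_cases heAq : ∃ q, (q, A) ∈ L
      · obtain ⟨q, hqA⟩ := heAq
        have hqAv : q.val < A.val := Fin.lt_def.mp (hL.1 _ hqA)
        set x : Fin n → Bool := fun t =>
          decide (t.val = A.val ∨ t.val = q.val ∨ (q.val % 2 = 0 ∧ t.val = q.val + 1)) with hx
        have hxA : applyLayer ((Fn n).erase (A,B)) x A = true := by
          rw [applyLayer_Fnerase_A hF]
          simp only [hx]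
          rw [decide_eq_true_eq]
          exact Or.inl trivial
        have hxq : applyLayer ((Fn n).erase (A,B)) x q = true :=
          FnLike_true (Finset.erase_subset _ _) x q
            (by simp only [hx]; rw [decide_eq_true_eq]; exact Or.inr (Or.inl trivial))
            (by intro hpar j hj; simp only [hx]; rw [decide_eq_true_eq]; omega)
        have hxB : applyLayer ((Fn n).erase (A,B)) x B = false := by
          rw [applyLayer_Fnerase_B hF]
          simp only [hx]; rw [decide_eq_false_iff_not]
          omega
        have hu1 : applyNet [(Fn n).erase (A,B), L] x q = true := by
          rw [applyNet_two, applyLayer_fst hL hqA, hxq, hxA]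
          rfl
        have hforce : ∀ z, applyNet [Fn n, L] z q = true →
            applyLayer (Fn n) z q = true ∧ applyLayer (Fn n) z A = true := by
          intro z hz
          rw [applyNet_two, applyLayer_fst hL hqA, Bool.and_eq_true] at hz
          exact hz
        by_cases heBr : ∃ r, (B, r) ∈ L
        · obtain ⟨r, hBr⟩ := heBr
          have hBrv : B.val < r.val := Fin.lt_def.mp (hL.1 _ hBr)
          obtain ⟨hqr, hAB2, hAr⟩ := distinct_channels hL hqA hBr (by omega)
          refine contra_helper hout' (u := q) (v := r) ?_ x hu1 ?_
          · intro z hz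
            obtain ⟨hzq, hzA⟩ := hforce z hz
            have hwB := Fn_sorted hF z hzA
            rw [applyNet_two, applyLayer_snd hL hBr, hwB, Bool.true_or]
          · rw [applyNet_two, applyLayer_snd hL hBr, hxB]
            have hxr : applyLayer ((Fn n).erase (A,B)) x r = false :=
              FnLike_false (Finset.erase_subset _ _) x r
                (by simp only [hx]; rw [decide_eq_false_iff_not]; omega)
                (by intro hpar i hi; simp only [hx]; rw [decide_eq_false_iff_not]; omega)
            rw [hxr]
            rfl
        · by_cases heBs : ∃ s, (s, B) ∈ L
          · obtain ⟨s, hsB⟩ := heBs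
            have hsBv : s.val < B.val := Fin.lt_def.mp (hL.1 _ hsB)
            have hsAv : s.val ≠ A.val := by
              intro h
              exact hno _ ((Fin.ext h : s = A) ▸ hsB) hF
            have hqsv : q.val ≠ s.val := by
              intro h
              have hAeB : A = B := fst_unique hL hqA ((Fin.ext h : q = s) ▸ hsB)
              have := congrArg Fin.val hAeB
              omega
            by_cases hbad : q.val % 2 = 0 ∧ s.val = q.val + 1
            · -- bad case: v = s
              refine contra_helper hout' (u := q) (v := s) ?_ x hu1 ?_
              · intro z hz
                obtain ⟨hzq, hzA⟩ := hforce z hz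
                have hwB := Fn_sorted hF z hzA
                have hws := Fn_sorted (mem_Fn.mpr ⟨hbad.1, hbad.2⟩) z hzq
                rw [applyNet_two, applyLayer_fst hL hsB, hws, hwB]
                rfl
              · rw [applyNet_two, applyLayer_fst hL hsB, hxB, Bool.and_false]
            · refine contra_helper hout' (u := q) (v := B) ?_ x hu1 ?_
              · intro z hz
                obtain ⟨hzq, hzA⟩ := hforce z hz
                have hwB := Fn_sorted hF z hzA
                rw [applyNet_two, applyLayer_snd hL hsB, hwB, Bool.or_true]
              · rw [applyNet_two, applyLayer_snd hL hsB, hxB]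
                have hxs : applyLayer ((Fn n).erase (A,B)) x s = false :=
                  FnLike_false (Finset.erase_subset _ _) x s
                    (by simp only [hx]; rw [decide_eq_false_iff_not]; omega)
                    (by intro hpar i hi; simp only [hx]; rw [decide_eq_false_iff_not]; omega)
                rw [hxs]
                rfl
          · have hB1 : ∀ j, (B,j) ∉ L := fun j hj => heBr ⟨j, hj⟩
            have hB2 : ∀ i, (i,B) ∉ L := fun i hi => heBs ⟨i, hi⟩
            refine contra_helper hout' (u := q) (v := B) ?_ x hu1 ?_
            · intro z hz
              obtain ⟨hzq, hzA⟩ := hforce z hz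
              have hwB := Fn_sorted hF z hzA
              rw [applyNet_two, applyLayer_unused hB1 hB2]
              exact hwB
            · rw [applyNet_two, applyLayer_unused hB1 hB2]
              exact hxB
      · -- A unused in L
        have hA1 : ∀ j, (A,j) ∉ L := fun j hj => heAp ⟨j, hj⟩
        have hA2' : ∀ i, (i,A) ∉ L := fun i hi => heAq ⟨i, hi⟩
        set x : Fin n → Bool := fun t => decide (t.val = A.val) with hx
        have hxA : applyLayer ((Fn n).erase (A,B)) x A = true := by
          rw [applyLayer_Fnerase_A hF]
          simp only [hx]
          rw [decide_eq_true_eq]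
          trivial
        have hxB : applyLayer ((Fn n).erase (A,B)) x B = false := by
          rw [applyLayer_Fnerase_B hF]
          simp only [hx]; rw [decide_eq_false_iff_not]
          omega
        have hu1 : applyNet [(Fn n).erase (A,B), L] x A = true := by
          rw [applyNet_two, applyLayer_unused hA1 hA2']
          exact hxA
        have hforce : ∀ z, applyNet [Fn n, L] z A = true → applyLayer (Fn n) z A = true := by
          intro z hz
          rw [applyNet_two, applyLayer_unused hA1 hA2'] at hz
          exact hz
        by_cases heBr : ∃ r, (B, r) ∈ L
        · obtain ⟨r, hBr⟩ := heBr
          have hBrv : B.val < r.val := Fin.lt_def.mp (hL.1 _ hBr)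
          refine contra_helper hout' (u := A) (v := r) ?_ x hu1 ?_
          · intro z hz
            have hwB := Fn_sorted hF z (hforce z hz)
            rw [applyNet_two, applyLayer_snd hL hBr, hwB, Bool.true_or]
          · rw [applyNet_two, applyLayer_snd hL hBr, hxB]
            have hxr : applyLayer ((Fn n).erase (A,B)) x r = false :=
              FnLike_false (Finset.erase_subset _ _) x r
                (by simp only [hx]; rw [decide_eq_false_iff_not]; omega)
                (by intro hpar i hi; simp only [hx]; rw [decide_eq_false_iff_not]; omega)
            rw [hxr]
            rfl
        · by_cases heBs : ∃ s, (s, B) ∈ L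
          · obtain ⟨s, hsB⟩ := heBs
            have hsBv : s.val < B.val := Fin.lt_def.mp (hL.1 _ hsB)
            have hsAv : s.val ≠ A.val := by
              intro h
              exact hA1 B ((Fin.ext h : s = A) ▸ hsB)
            refine contra_helper hout' (u := A) (v := B) ?_ x hu1 ?_
            · intro z hz
              have hwB := Fn_sorted hF z (hforce z hz)
              rw [applyNet_two, applyLayer_snd hL hsB, hwB, Bool.or_true]
            · rw [applyNet_two, applyLayer_snd hL hsB, hxB]
              have hxs : applyLayer ((Fn n).erase (A,B)) x s = false :=
                FnLike_false (Finset.erase_subset _ _) x s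
                  (by simp only [hx]; rw [decide_eq_false_iff_not]; omega)
                  (by intro hpar i hi; simp only [hx]; rw [decide_eq_false_iff_not]; omega)
              rw [hxs]
              rfl
          · have hB1 : ∀ j, (B,j) ∉ L := fun j hj => heBr ⟨j, hj⟩
            have hB2 : ∀ i, (i,B) ∉ L := fun i hi => heBs ⟨i, hi⟩
            refine contra_helper hout' (u := A) (v := B) ?_ x hu1 ?_
            · intro z hz
              have hwB := Fn_sorted hF z (hforce z hz)
              rw [applyNet_two, applyLayer_unused hB1 hB2]
              exact hwB
            · rw [applyNet_two, applyLayer_unused hB1 hB2]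
              exact hxB
  · -- removing a comparator from the second layer L
    have hcL : (A,B) ∈ L := hcmem
    have hout' : outputs [Fn n, L.erase (A,B)] = outputs [Fn n, L] := hout
    have hABv : A.val < B.val := Fin.lt_def.mp (hL.1 _ hcL)
    have hnF : ¬(A.val % 2 = 0 ∧ B.val = A.val + 1) := by
      intro h
      exact hno _ hcL (mem_Fn.mpr h)
    set x : Fin n → Bool := fun t =>
      decide (t.val = A.val ∨ (A.val % 2 = 0 ∧ t.val = A.val + 1) ∨
        (A.val % 2 = 1 ∧ t.val + 1 = A.val)) with hx
    have hwA : applyLayer (Fn n) x A = true :=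
      FnLike_true (subset_refl _) x A
        (by simp only [hx]; rw [decide_eq_true_eq]; exact Or.inl trivial)
        (by intro hpar j hj; simp only [hx]; rw [decide_eq_true_eq]; omega)
    have hwB : applyLayer (Fn n) x B = false :=
      FnLike_false (subset_refl _) x B
        (by simp only [hx]; rw [decide_eq_false_iff_not]; omega)
        (by intro hpar i hi; simp only [hx]; rw [decide_eq_false_iff_not]; omega)
    refine contra_helper hout' (u := A) (v := B) ?_ x ?_ ?_
    · intro z hz
      rw [applyNet_two, applyLayer_fst hL hcL, Bool.and_eq_true] at hz
      rw [applyNet_two, applyLayer_snd hL hcL, hz.1, Bool.true_or]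
    · rw [applyNet_two, applyLayer_erase_self_fst hL hcL]
      exact hwA
    · rw [applyNet_two, applyLayer_erase_self_snd hL hcL]
      exact hwB


lemma pairIn_symm {L : Finset (Fin n × Fin n)} {i j : Fin n} (h : PairIn L i j) :
    PairIn L j i := h.elim Or.inr Or.inl

lemma pairIn_irrefl {L : Finset (Fin n × Fin n)} (hL : IsLayer L) (i : Fin n) :
    ¬ PairIn L i i := by
  rintro (h | h) <;> exact absurd (hL.1 _ h) (lt_irrefl i)

lemma pair_unique_fst {L : Finset (Fin n × Fin n)} (hL : IsLayer L) {A B : Fin n}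
    (hab : (A,B) ∈ L) : ∀ j, PairIn L A j → j = B := by
  rintro j (h | h)
  · exact fst_unique hL h hab
  · exact absurd h (not_snd hL hab j)

lemma pair_unique_snd {L : Finset (Fin n × Fin n)} (hL : IsLayer L) {A B : Fin n}
    (hab : (A,B) ∈ L) : ∀ j, PairIn L B j → j = A := by
  rintro j (h | h)
  · exact absurd h (not_fst hL hab j)
  · exact snd_unique hL h hab

/-- Embedding of `Fin (n-2)` into `Fin n` skipping positions `a` and `a+1`. -/
def emb (a : ℕ) (i : Fin (n-2)) : Fin n :=
  ⟨if i.val < a then i.val else i.val + 2, by have := i.isLt; split <;> omega⟩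

lemma emb_val (a : ℕ) (i : Fin (n-2)) :
    (emb (n := n) a i).val = if i.val < a then i.val else i.val + 2 := rfl

/-- Partial inverse of `emb`. -/
def unemb (a : ℕ) (ha : a + 2 ≤ n) (hn : 3 ≤ n) (j : Fin n) : Fin (n-2) :=
  ⟨if j.val < a then j.val else j.val - 2, by have := j.isLt; split <;> omega⟩

lemma unemb_val (a : ℕ) (ha : a + 2 ≤ n) (hn : 3 ≤ n) (j : Fin n) :
    (unemb a ha hn j).val = if j.val < a then j.val else j.val - 2 := rfl

lemma unemb_emb {a : ℕ} (ha : a + 2 ≤ n) (hn : 3 ≤ n) (i : Fin (n-2)) :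
    unemb a ha hn (emb a i) = i := by
  have := i.isLt
  apply Fin.ext
  rw [unemb_val, emb_val]
  split_ifs <;> omega

lemma emb_unemb {a : ℕ} (ha : a + 2 ≤ n) (hn : 3 ≤ n) (j : Fin n)
    (hj1 : j.val ≠ a) (hj2 : j.val ≠ a + 1) : emb a (unemb a ha hn j) = j := by
  have := j.isLt
  apply Fin.ext
  rw [emb_val, unemb_val]
  split_ifs <;> omega

lemma emb_ne {a : ℕ} (i : Fin (n-2)) :
    (emb (n := n) a i).val ≠ a ∧ (emb (n := n) a i).val ≠ a + 1 := by
  rw [emb_val]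
  split <;> omega

lemma emb_inj {a : ℕ} {i j : Fin (n-2)} (h : emb (n := n) a i = emb a j) : i = j := by
  have hv := congrArg Fin.val h
  rw [emb_val, emb_val] at hv
  apply Fin.ext
  split_ifs at hv <;> omega

lemma emb0_val (i : Fin (n-2)) : (emb (n := n) 0 i).val = i.val + 2 := by
  rw [emb_val, if_neg (by omega)]

/-- Deleting channels `a` and `a+1` from a network. -/
def del (a : ℕ) (L : Finset (Fin n × Fin n)) : Finset (Fin (n-2) × Fin (n-2)) :=
  Finset.univ.filter (fun c => (emb a c.1, emb a c.2) ∈ L)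

lemma mem_del {a : ℕ} {L : Finset (Fin n × Fin n)} {i j : Fin (n-2)} :
    (i, j) ∈ del a L ↔ (emb a i, emb a j) ∈ L := by
  simp [del]

lemma pairIn_del {a : ℕ} {L : Finset (Fin n × Fin n)} {i j : Fin (n-2)} :
    PairIn (del a L) i j ↔ PairIn L (emb a i) (emb a j) := by
  unfold PairIn
  rw [mem_del, mem_del]

lemma isLayer_del {a : ℕ} {L : Finset (Fin n × Fin n)} (hL : IsLayer L) :
    IsLayer (del a L) := by
  constructor
  · rintro ⟨i, j⟩ hc
    rw [mem_del] at hc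
    have := hL.1 _ hc
    rw [Fin.lt_def] at this ⊢
    rw [emb_val, emb_val] at this
    dsimp only at this ⊢
    split_ifs at this <;> omega
  · rintro ⟨i, j⟩ hc ⟨i', j'⟩ hc' hne
    rw [mem_del] at hc hc'
    have hne2 : ((emb (n := n) a i, emb a j)) ≠ ((emb (n := n) a i', emb a j')) := by
      intro h
      rw [Prod.ext_iff] at h
      exact hne (by rw [Prod.ext_iff]; exact ⟨emb_inj h.1, emb_inj h.2⟩)
    have hd := hL.2 _ hc _ hc' hne2
    exact ⟨fun h => hd.1 (congrArg (emb a) h), fun h => hd.2.1 (congrArg (emb a) h),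
      fun h => hd.2.2.1 (congrArg (emb a) h), fun h => hd.2.2.2 (congrArg (emb a) h)⟩

lemma pairIn_Fn_iff {i j : Fin n} :
    PairIn (Fn n) i j ↔
      (i.val % 2 = 0 ∧ j.val = i.val + 1) ∨ (j.val % 2 = 0 ∧ i.val = j.val + 1) := by
  unfold PairIn
  rw [mem_Fn, mem_Fn]

lemma pairIn_Fn_emb {a : ℕ} (ha2 : a % 2 = 0) (han : a + 2 ≤ n) {i j : Fin (n-2)} :
    PairIn (Fn (n-2)) i j ↔ PairIn (Fn n) (emb a i) (emb a j) := by
  rw [pairIn_Fn_iff, pairIn_Fn_iff, emb_val, emb_val]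
  have hi := i.isLt
  have hj := j.isLt
  split_ifs <;> omega

/-- Lifting a network on `n-2` channels to channels `2..n-1`. -/
def lift0 (L' : Finset (Fin (n-2) × Fin (n-2))) : Finset (Fin n × Fin n) :=
  L'.image (fun c => (emb 0 c.1, emb 0 c.2))

/-- Adding a duplicate comparator `(0,1)` to a lifted network. -/
def psi (hn : 3 ≤ n) (L' : Finset (Fin (n-2) × Fin (n-2))) : Finset (Fin n × Fin n) :=
  insert (⟨0, by omega⟩, ⟨1, by omega⟩) (lift0 L')

lemma mem_psi {hn : 3 ≤ n} {L' : Finset (Fin (n-2) × Fin (n-2))} {u v : Fin n} :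
    (u, v) ∈ psi hn L' ↔
      (u.val = 0 ∧ v.val = 1) ∨
      (2 ≤ u.val ∧ 2 ≤ v.val ∧
        (unemb 0 (by omega) hn u, unemb 0 (by omega) hn v) ∈ L') := by
  unfold psi
  rw [Finset.mem_insert]
  constructor
  · rintro (h | h)
    · rw [Prod.ext_iff] at h
      left
      exact ⟨congrArg Fin.val h.1, congrArg Fin.val h.2⟩
    · unfold lift0 at h
      rw [Finset.mem_image] at h
      obtain ⟨⟨i, j⟩, hij, heq⟩ := h
      rw [Prod.ext_iff] at heq
      dsimp only at heq
      obtain ⟨h1, h2⟩ := heq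
      right
      have hu : u.val = i.val + 2 := by rw [← h1, emb0_val]
      have hv : v.val = j.val + 2 := by rw [← h2, emb0_val]
      refine ⟨by omega, by omega, ?_⟩
      have e1 : unemb 0 (by omega) hn u = i := by rw [← h1, unemb_emb]
      have e2 : unemb 0 (by omega) hn v = j := by rw [← h2, unemb_emb]
      rw [e1, e2]
      exact hij
  · rintro (⟨h1, h2⟩ | ⟨h1, h2, h3⟩)
    · left
      rw [Prod.ext_iff]
      exact ⟨Fin.ext h1, Fin.ext h2⟩
    · right
      unfold lift0
      rw [Finset.mem_image]
      refine ⟨_, h3, ?_⟩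
      rw [Prod.ext_iff]
      dsimp only
      constructor
      · exact emb_unemb (by omega) hn u (by omega) (by omega)
      · exact emb_unemb (by omega) hn v (by omega) (by omega)

lemma isLayer_psi {hn : 3 ≤ n} {L' : Finset (Fin (n-2) × Fin (n-2))} (hL' : IsLayer L') :
    IsLayer (psi hn L') := by
  constructor
  · rintro ⟨u, v⟩ hc
    rw [mem_psi] at hc
    rw [Fin.lt_def]
    show u.val < v.val
    rcases hc with ⟨h1, h2⟩ | ⟨h1, h2, h3⟩
    · omega
    · have hlt := hL'.1 _ h3
      rw [Fin.lt_def, unemb_val, unemb_val] at hlt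
      split_ifs at hlt <;> omega
  · rintro ⟨u, v⟩ hc ⟨u', v'⟩ hc' hne
    rw [mem_psi] at hc hc'
    rcases hc with ⟨h1, h2⟩ | ⟨h1, h2, h3⟩ <;> rcases hc' with ⟨h1', h2'⟩ | ⟨h1', h2', h3'⟩
    · exfalso
      apply hne
      rw [Prod.ext_iff]
      exact ⟨Fin.ext (show u.val = u'.val by omega), Fin.ext (show v.val = v'.val by omega)⟩
    · exact ⟨fun (h : u = u') => by have := congrArg Fin.val h; omega,
        fun (h : u = v') => by have := congrArg Fin.val h; omega,
        fun (h : v = u') => by have := congrArg Fin.val h; omega,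
        fun (h : v = v') => by have := congrArg Fin.val h; omega⟩
    · exact ⟨fun (h : u = u') => by have := congrArg Fin.val h; omega,
        fun (h : u = v') => by have := congrArg Fin.val h; omega,
        fun (h : v = u') => by have := congrArg Fin.val h; omega,
        fun (h : v = v') => by have := congrArg Fin.val h; omega⟩
    · have hne2 : ((unemb 0 (by omega) hn u, unemb 0 (by omega) hn v) :
          Fin (n-2) × Fin (n-2)) ≠ (unemb 0 (by omega) hn u', unemb 0 (by omega) hn v') := by
        intro h
        rw [Prod.ext_iff] at h
        obtain ⟨e1, e2⟩ := h
        have e1v := congrArg Fin.val e1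
        have e2v := congrArg Fin.val e2
        rw [unemb_val, unemb_val] at e1v
        rw [unemb_val, unemb_val] at e2v
        apply hne
        rw [Prod.ext_iff]
        constructor
        · exact Fin.ext (show u.val = u'.val by split_ifs at e1v <;> omega)
        · exact Fin.ext (show v.val = v'.val by split_ifs at e2v <;> omega)
      have hd := hL'.2 _ h3 _ h3' hne2
      exact ⟨fun (h : u = u') => hd.1 (by rw [h]),
        fun (h : u = v') => hd.2.1 (by rw [h]),
        fun (h : v = u') => hd.2.2.1 (by rw [h]),
        fun (h : v = v') => hd.2.2.2 (by rw [h])⟩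


lemma del0_psi (hn : 3 ≤ n) (L' : Finset (Fin (n-2) × Fin (n-2))) :
    del 0 (psi hn L') = L' := by
  ext ⟨i, j⟩
  rw [mem_del, mem_psi]
  constructor
  · rintro (⟨h1, h2⟩ | ⟨h1, h2, h3⟩)
    · rw [emb0_val] at h1
      omega
    · rwa [unemb_emb, unemb_emb] at h3
  · intro h
    right
    refine ⟨by rw [emb0_val]; omega, by rw [emb0_val]; omega, ?_⟩
    rw [unemb_emb, unemb_emb]
    exact h

/-- The candidate duplicate positions of `L`. -/
def dupIdxSet (L : Finset (Fin n × Fin n)) : Finset ℕ := (L ∩ Fn n).image (fun c => c.1.val)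

/-- The least position of a duplicated comparator. -/
def aIdx (L : Finset (Fin n × Fin n)) : ℕ :=
  if h : (dupIdxSet L).Nonempty then (dupIdxSet L).min' h else 0

lemma aIdx_spec {L : Finset (Fin n × Fin n)} (h : ∃ c ∈ L, c ∈ Fn n) :
    ∃ A B : Fin n, (A, B) ∈ L ∧ (A, B) ∈ Fn n ∧ A.val = aIdx L ∧ B.val = aIdx L + 1 ∧
      aIdx L % 2 = 0 ∧ ∀ c ∈ L, c ∈ Fn n → aIdx L ≤ c.1.val := by
  obtain ⟨c, hcL, hcF⟩ := h
  have hne : (dupIdxSet L).Nonempty :=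
    ⟨c.1.val, Finset.mem_image.mpr ⟨c, Finset.mem_inter.mpr ⟨hcL, hcF⟩, rfl⟩⟩
  have haIdx : aIdx L = (dupIdxSet L).min' hne := dif_pos hne
  have hmem := (dupIdxSet L).min'_mem hne
  rw [← haIdx] at hmem
  obtain ⟨⟨A, B⟩, hd, hdv⟩ := Finset.mem_image.mp hmem
  obtain ⟨hdL, hdF⟩ := Finset.mem_inter.mp hd
  obtain ⟨hA2, hB⟩ := mem_Fn.mp hdF
  dsimp only at hdv hA2 hB
  refine ⟨A, B, hdL, hdF, hdv, by omega, by omega, ?_⟩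
  intro c' hc'L hc'F
  rw [haIdx]
  exact Finset.min'_le _ _ (Finset.mem_image.mpr ⟨c', Finset.mem_inter.mpr ⟨hc'L, hc'F⟩, rfl⟩)

/-- The "roundtrip" permutation: moves block `{a,a+1}` to `{0,1}` inverse-wise. -/
def rtPerm (a : ℕ) (ha : a + 2 ≤ n) : Equiv.Perm (Fin n) where
  toFun j := ⟨if j.val < 2 then j.val + a else if j.val < a + 2 then j.val - 2 else j.val,
    by have := j.isLt; split_ifs <;> omega⟩
  invFun j := ⟨if j.val < a then j.val + 2 else if j.val < a + 2 then j.val - a else j.val,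
    by have := j.isLt; split_ifs <;> omega⟩
  left_inv j := by
    apply Fin.ext
    have := j.isLt
    dsimp only
    split_ifs <;> omega
  right_inv j := by
    apply Fin.ext
    have := j.isLt
    dsimp only
    split_ifs <;> omega

lemma rtPerm_val (a : ℕ) (ha : a + 2 ≤ n) (j : Fin n) :
    (rtPerm a ha j).val =
      if j.val < 2 then j.val + a else if j.val < a + 2 then j.val - 2 else j.val := rfl

lemma rtPerm_emb0 (a : ℕ) (ha : a + 2 ≤ n) (u : Fin (n-2)) :
    rtPerm a ha (emb 0 u) = emb a u := by
  apply Fin.ext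
  rw [rtPerm_val, emb0_val, emb_val]
  have := u.isLt
  split_ifs <;> omega

/-- Swap of the blocks `{a,a+1}` and `{a₂,a₂+1}`. -/
def blockSwapFun (a a₂ : ℕ) (h : a + 2 ≤ n) (h₂ : a₂ + 2 ≤ n) (j : Fin n) : Fin n :=
  ⟨if a ≤ j.val ∧ j.val < a + 2 then j.val - a + a₂
    else if a₂ ≤ j.val ∧ j.val < a₂ + 2 then j.val - a₂ + a else j.val,
    by have := j.isLt; split_ifs <;> omega⟩

lemma blockSwapFun_val (a a₂ : ℕ) (h : a + 2 ≤ n) (h₂ : a₂ + 2 ≤ n) (j : Fin n) :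
    (blockSwapFun a a₂ h h₂ j).val =
      if a ≤ j.val ∧ j.val < a + 2 then j.val - a + a₂
      else if a₂ ≤ j.val ∧ j.val < a₂ + 2 then j.val - a₂ + a else j.val := rfl

lemma blockSwapFun_invol (a a₂ : ℕ) (h : a + 2 ≤ n) (h₂ : a₂ + 2 ≤ n)
    (he : a % 2 = 0) (he₂ : a₂ % 2 = 0) :
    Function.Involutive (blockSwapFun a a₂ h h₂) := by
  intro j
  apply Fin.ext
  rw [blockSwapFun_val, blockSwapFun_val]
  have := j.isLt
  split_ifs <;> omega

/-- Ascend a permutation of `Fin (n-2)` to one of `Fin n` fixing `0` and `1`. -/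
def ascendPerm (hn : 3 ≤ n) (π' : Equiv.Perm (Fin (n-2))) : Equiv.Perm (Fin n) where
  toFun j := if j.val < 2 then j else emb 0 (π' (unemb 0 (by omega) hn j))
  invFun j := if j.val < 2 then j else emb 0 (π'.symm (unemb 0 (by omega) hn j))
  left_inv j := by
    by_cases h : j.val < 2
    · dsimp only
      rw [if_pos h, if_pos h]
    · have h2 : ¬ (emb 0 (π' (unemb 0 (by omega : 0 + 2 ≤ n) hn j))).val < 2 := by
        rw [emb0_val]
        omega
      dsimp only
      rw [if_neg h, if_neg h2, unemb_emb, Equiv.symm_apply_apply,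
        emb_unemb _ hn j (by omega) (by omega)]
  right_inv j := by
    by_cases h : j.val < 2
    · dsimp only
      rw [if_pos h, if_pos h]
    · have h2 : ¬ (emb 0 (π'.symm (unemb 0 (by omega : 0 + 2 ≤ n) hn j))).val < 2 := by
        rw [emb0_val]
        omega
      dsimp only
      rw [if_neg h, if_neg h2, unemb_emb, Equiv.apply_symm_apply,
        emb_unemb _ hn j (by omega) (by omega)]

lemma ascendPerm_lt {hn : 3 ≤ n} {π' : Equiv.Perm (Fin (n-2))} {j : Fin n} (h : j.val < 2) :
    ascendPerm hn π' j = j := if_pos h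

lemma ascendPerm_ge {hn : 3 ≤ n} {π' : Equiv.Perm (Fin (n-2))} {j : Fin n} (h : ¬ j.val < 2) :
    ascendPerm hn π' j = emb 0 (π' (unemb 0 (by omega) hn j)) := if_neg h

/-- Descend a permutation of `Fin n` mapping the complement of block `a`
to the complement of block `a₂`. -/
def descendPerm (a a₂ : ℕ) (ha : a + 2 ≤ n) (ha₂ : a₂ + 2 ≤ n) (hn : 3 ≤ n)
    (ρ : Equiv.Perm (Fin n))
    (hρ : ∀ j : Fin n, j.val ≠ a → j.val ≠ a + 1 → (ρ j).val ≠ a₂ ∧ (ρ j).val ≠ a₂ + 1)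
    (hρ' : ∀ j : Fin n, j.val ≠ a₂ → j.val ≠ a₂ + 1 →
      (ρ.symm j).val ≠ a ∧ (ρ.symm j).val ≠ a + 1) :
    Equiv.Perm (Fin (n-2)) where
  toFun i := unemb a₂ ha₂ hn (ρ (emb a i))
  invFun i := unemb a ha hn (ρ.symm (emb a₂ i))
  left_inv i := by
    have he := emb_ne (a := a) (n := n) i
    have h2 := hρ _ he.1 he.2
    dsimp only
    rw [emb_unemb ha₂ hn _ h2.1 h2.2, Equiv.symm_apply_apply, unemb_emb]
  right_inv i := by
    have he := emb_ne (a := a₂) (n := n) i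
    have h2 := hρ' _ he.1 he.2
    dsimp only
    rw [emb_unemb ha hn _ h2.1 h2.2, Equiv.apply_symm_apply, unemb_emb]

lemma descendPerm_emb {a a₂ : ℕ} {ha : a + 2 ≤ n} {ha₂ : a₂ + 2 ≤ n} {hn : 3 ≤ n}
    {ρ : Equiv.Perm (Fin n)} {hρ} {hρ'} (i : Fin (n-2)) :
    emb a₂ (descendPerm a a₂ ha ha₂ hn ρ hρ hρ' i) = ρ (emb a i) := by
  have he := emb_ne (a := a) (n := n) i
  have h2 := hρ _ he.1 he.2
  show emb a₂ (unemb a₂ ha₂ hn (ρ (emb a i))) = ρ (emb a i)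
  rw [emb_unemb ha₂ hn _ h2.1 h2.2]


lemma netEquiv2_symm {A B : Finset (Fin n × Fin n) × Finset (Fin n × Fin n)}
    (h : NetEquiv2 A B) : NetEquiv2 B A := by
  obtain ⟨π, h1, h2⟩ := h
  refine ⟨π.symm, fun i j => ?_, fun i j => ?_⟩
  · have := (h1 (π.symm i) (π.symm j)).symm
    rwa [Equiv.apply_symm_apply, Equiv.apply_symm_apply] at this
  · have := (h2 (π.symm i) (π.symm j)).symm
    rwa [Equiv.apply_symm_apply, Equiv.apply_symm_apply] at this

lemma netEquiv_psi_del (hn : 3 ≤ n) {L : Finset (Fin n × Fin n)} (hL : IsLayer L)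
    (hdup : ∃ c ∈ L, c ∈ Fn n) :
    NetEquiv2 (Fn n, psi hn (del (aIdx L) L)) (Fn n, L) := by
  obtain ⟨A, B, hABL, hABF, hAv, hBv, hae, hmin⟩ := aIdx_spec hdup
  set a := aIdx L with haa
  have ha : a + 2 ≤ n := by have := B.isLt; omega
  have hfwd : ∀ i j : Fin n, (i, j) ∈ psi hn (del a L) →
      (rtPerm a ha i, rtPerm a ha j) ∈ L := by
    intro i j hm
    rw [mem_psi] at hm
    rcases hm with ⟨h0, h1⟩ | ⟨h2i, h2j, hm'⟩
    · have e1 : rtPerm a ha i = A := Fin.ext (by rw [rtPerm_val]; split_ifs <;> omega)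
      have e2 : rtPerm a ha j = B := Fin.ext (by rw [rtPerm_val]; split_ifs <;> omega)
      rw [e1, e2]
      exact hABL
    · have e1 : rtPerm a ha i = emb a (unemb 0 (by omega) hn i) := by
        conv_lhs => rw [← emb_unemb (show (0:ℕ)+2 ≤ n by omega) hn i (by omega) (by omega)]
        exact rtPerm_emb0 a ha _
      have e2 : rtPerm a ha j = emb a (unemb 0 (by omega) hn j) := by
        conv_lhs => rw [← emb_unemb (show (0:ℕ)+2 ≤ n by omega) hn j (by omega) (by omega)]
        exact rtPerm_emb0 a ha _
      rw [e1, e2]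
      exact mem_del.mp hm'
  have hbwd : ∀ i j : Fin n, (rtPerm a ha i, rtPerm a ha j) ∈ L →
      (i, j) ∈ psi hn (del a L) := by
    intro i j hm
    by_cases hi : i.val < 2
    · by_cases hi0 : i.val = 0
      · have e1 : rtPerm a ha i = A := Fin.ext (by rw [rtPerm_val]; split_ifs <;> omega)
        rw [e1] at hm
        have hjB : rtPerm a ha j = B := pair_unique_fst hL hABL _ (Or.inl hm)
        have hj1 : j = ⟨1, by omega⟩ := by
          apply (rtPerm a ha).injective
          rw [hjB]
          have hx1 : rtPerm a ha ⟨1, by omega⟩ = B := by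
            apply Fin.ext
            rw [rtPerm_val]
            show (if 1 < 2 then 1 + a else if 1 < a + 2 then 1 - 2 else (1:ℕ)) = B.val
            rw [if_pos (by omega : (1:ℕ) < 2)]
            omega
          exact hx1.symm
        rw [mem_psi]
        left
        exact ⟨hi0, by rw [hj1]⟩
      · have e1 : rtPerm a ha i = B := Fin.ext (by rw [rtPerm_val]; split_ifs <;> omega)
        rw [e1] at hm
        exact absurd hm (not_fst hL hABL _)
    · have e1 : rtPerm a ha i = emb a (unemb 0 (by omega) hn i) := by
        conv_lhs => rw [← emb_unemb (show (0:ℕ)+2 ≤ n by omega) hn i (by omega) (by omega)]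
        exact rtPerm_emb0 a ha _
      by_cases hj : j.val < 2
      · by_cases hj0 : j.val = 0
        · have e2 : rtPerm a ha j = A := Fin.ext (by rw [rtPerm_val]; split_ifs <;> omega)
          rw [e2] at hm
          exact absurd hm (not_snd hL hABL _)
        · have e2 : rtPerm a ha j = B := Fin.ext (by rw [rtPerm_val]; split_ifs <;> omega)
          rw [e2] at hm
          have hPA : rtPerm a ha i = A := snd_unique hL hm hABL
          have hv := congrArg Fin.val (e1.symm.trans hPA)
          have hne := emb_ne (a := a) (n := n) (unemb 0 (by omega) hn i)
          rw [hAv] at hv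
          exact absurd hv hne.1
      · have e2 : rtPerm a ha j = emb a (unemb 0 (by omega) hn j) := by
          conv_lhs => rw [← emb_unemb (show (0:ℕ)+2 ≤ n by omega) hn j (by omega) (by omega)]
          exact rtPerm_emb0 a ha _
        rw [e1, e2] at hm
        rw [mem_psi]
        right
        exact ⟨by omega, by omega, mem_del.mpr hm⟩
  refine ⟨rtPerm a ha, fun i j => ?_, fun i j => ?_⟩
  · rw [pairIn_Fn_iff, pairIn_Fn_iff, rtPerm_val, rtPerm_val]
    have hi := i.isLt
    have hj := j.isLt
    split_ifs <;> omega
  · constructor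
    · rintro (hm | hm)
      · exact Or.inl (hfwd _ _ hm)
      · exact Or.inr (hfwd _ _ hm)
    · rintro (hm | hm)
      · exact Or.inl (hbwd _ _ hm)
      · exact Or.inr (hbwd _ _ hm)


lemma blockSwap_Fn {a a₂ : ℕ} (h : a + 2 ≤ n) (h₂ : a₂ + 2 ≤ n)
    (he : a % 2 = 0) (he₂ : a₂ % 2 = 0) (i j : Fin n) :
    PairIn (Fn n) i j ↔
      PairIn (Fn n) (blockSwapFun a a₂ h h₂ i) (blockSwapFun a a₂ h h₂ j) := by
  rw [pairIn_Fn_iff, pairIn_Fn_iff, blockSwapFun_val, blockSwapFun_val]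
  have hi := i.isLt
  have hj := j.isLt
  split_ifs <;> omega

lemma blockSwap_avoid {a a₂ : ℕ} (h : a + 2 ≤ n) (h₂ : a₂ + 2 ≤ n)
    (he : a % 2 = 0) (he₂ : a₂ % 2 = 0) (v : Fin n) (h1 : v.val ≠ a) (h2 : v.val ≠ a + 1) :
    (blockSwapFun a a₂ h h₂ v).val ≠ a₂ ∧ (blockSwapFun a a₂ h h₂ v).val ≠ a₂ + 1 := by
  rw [blockSwapFun_val]
  have := v.isLt
  split_ifs <;> omega

lemma blockSwap_avoid' {a a₂ : ℕ} (h : a + 2 ≤ n) (h₂ : a₂ + 2 ≤ n)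
    (he : a % 2 = 0) (he₂ : a₂ % 2 = 0) (v : Fin n) (h1 : v.val ≠ a₂) (h2 : v.val ≠ a₂ + 1) :
    (blockSwapFun a a₂ h h₂ v).val ≠ a ∧ (blockSwapFun a a₂ h h₂ v).val ≠ a + 1 := by
  rw [blockSwapFun_val]
  have := v.isLt
  split_ifs <;> omega

lemma blockSwap_pairs_fwd {M : Finset (Fin n × Fin n)} (hM : IsLayer M) {a a₂ : ℕ}
    (h : a + 2 ≤ n) (h₂ : a₂ + 2 ≤ n) (he : a % 2 = 0) (he₂ : a₂ % 2 = 0)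
    {A1 B1 A2 B2 : Fin n} (hv1 : A1.val = a) (hw1 : B1.val = a + 1)
    (hv2 : A2.val = a₂) (hw2 : B2.val = a₂ + 1)
    (hm1 : (A1, B1) ∈ M) (hm2 : (A2, B2) ∈ M) :
    ∀ i j, PairIn M i j →
      PairIn M (blockSwapFun a a₂ h h₂ i) (blockSwapFun a a₂ h h₂ j) := by
  intro i j hp
  by_cases c1 : i.val = a
  · have hiA : i = A1 := Fin.ext (by omega)
    have hjB : j = B1 := pair_unique_fst hM hm1 j (hiA ▸ hp)
    have hjv : j.val = a + 1 := by rw [hjB, hw1]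
    have e1 : blockSwapFun a a₂ h h₂ i = A2 :=
      Fin.ext (by rw [blockSwapFun_val]; split_ifs <;> omega)
    have e2 : blockSwapFun a a₂ h h₂ j = B2 :=
      Fin.ext (by rw [blockSwapFun_val]; split_ifs <;> omega)
    rw [e1, e2]
    exact Or.inl hm2
  · by_cases c2 : i.val = a + 1
    · have hiB : i = B1 := Fin.ext (by omega)
      have hjA : j = A1 := pair_unique_snd hM hm1 j (hiB ▸ hp)
      have hjv : j.val = a := by rw [hjA, hv1]
      have e1 : blockSwapFun a a₂ h h₂ i = B2 :=
        Fin.ext (by rw [blockSwapFun_val]; split_ifs <;> omega)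
      have e2 : blockSwapFun a a₂ h h₂ j = A2 :=
        Fin.ext (by rw [blockSwapFun_val]; split_ifs <;> omega)
      rw [e1, e2]
      exact Or.inr hm2
    · by_cases c3 : i.val = a₂
      · have hiA : i = A2 := Fin.ext (by omega)
        have hjB : j = B2 := pair_unique_fst hM hm2 j (hiA ▸ hp)
        have hjv : j.val = a₂ + 1 := by rw [hjB, hw2]
        have e1 : blockSwapFun a a₂ h h₂ i = A1 :=
          Fin.ext (by rw [blockSwapFun_val]; split_ifs <;> omega)
        have e2 : blockSwapFun a a₂ h h₂ j = B1 :=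
          Fin.ext (by rw [blockSwapFun_val]; split_ifs <;> omega)
        rw [e1, e2]
        exact Or.inl hm1
      · by_cases c4 : i.val = a₂ + 1
        · have hiB : i = B2 := Fin.ext (by omega)
          have hjA : j = A2 := pair_unique_snd hM hm2 j (hiB ▸ hp)
          have hjv : j.val = a₂ := by rw [hjA, hv2]
          have e1 : blockSwapFun a a₂ h h₂ i = B1 :=
            Fin.ext (by rw [blockSwapFun_val]; split_ifs <;> omega)
          have e2 : blockSwapFun a a₂ h h₂ j = A1 :=
            Fin.ext (by rw [blockSwapFun_val]; split_ifs <;> omega)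
          rw [e1, e2]
          exact Or.inr hm1
        · have e1 : blockSwapFun a a₂ h h₂ i = i :=
            Fin.ext (by rw [blockSwapFun_val]; split_ifs <;> omega)
          by_cases d1 : j.val = a
          · exfalso
            have hjA : j = A1 := Fin.ext (by omega)
            have := pair_unique_fst hM hm1 i (hjA ▸ pairIn_symm hp)
            rw [this] at c2
            exact c2 hw1
          · by_cases d2 : j.val = a + 1
            · exfalso
              have hjB : j = B1 := Fin.ext (by omega)
              have := pair_unique_snd hM hm1 i (hjB ▸ pairIn_symm hp)
              rw [this] at c1
              exact c1 hv1
            · by_cases d3 : j.val = a₂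
              · exfalso
                have hjA : j = A2 := Fin.ext (by omega)
                have := pair_unique_fst hM hm2 i (hjA ▸ pairIn_symm hp)
                rw [this] at c4
                exact c4 hw2
              · by_cases d4 : j.val = a₂ + 1
                · exfalso
                  have hjB : j = B2 := Fin.ext (by omega)
                  have := pair_unique_snd hM hm2 i (hjB ▸ pairIn_symm hp)
                  rw [this] at c3
                  exact c3 hv2
                · have e2 : blockSwapFun a a₂ h h₂ j = j :=
                    Fin.ext (by rw [blockSwapFun_val]; split_ifs <;> omega)
                  rw [e1, e2]
                  exact hp

lemma blockSwap_pairs {M : Finset (Fin n × Fin n)} (hM : IsLayer M) {a a₂ : ℕ}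
    (h : a + 2 ≤ n) (h₂ : a₂ + 2 ≤ n) (he : a % 2 = 0) (he₂ : a₂ % 2 = 0)
    {A1 B1 A2 B2 : Fin n} (hv1 : A1.val = a) (hw1 : B1.val = a + 1)
    (hv2 : A2.val = a₂) (hw2 : B2.val = a₂ + 1)
    (hm1 : (A1, B1) ∈ M) (hm2 : (A2, B2) ∈ M) (i j : Fin n) :
    PairIn M i j ↔ PairIn M (blockSwapFun a a₂ h h₂ i) (blockSwapFun a a₂ h h₂ j) := by
  constructor
  · exact blockSwap_pairs_fwd hM h h₂ he he₂ hv1 hw1 hv2 hw2 hm1 hm2 i j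
  · intro hp
    have := blockSwap_pairs_fwd hM h₂ h he₂ he hv2 hw2 hv1 hw1 hm2 hm1 _ _ hp
    have einv : ∀ v : Fin n, blockSwapFun a₂ a h₂ h (blockSwapFun a a₂ h h₂ v) = v := by
      intro v
      apply Fin.ext
      rw [blockSwapFun_val, blockSwapFun_val]
      have := v.isLt
      split_ifs <;> omega
    rwa [einv i, einv j] at this


lemma F_welldef (hn : 3 ≤ n) {L M : Finset (Fin n × Fin n)} (hL : IsLayer L) (hM : IsLayer M)
    (hdL : ∃ c ∈ L, c ∈ Fn n) (hdM : ∃ c ∈ M, c ∈ Fn n)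
    (hE : NetEquiv2 (Fn n, L) (Fn n, M)) :
    NetEquiv2 (Fn (n-2), del (aIdx L) L) (Fn (n-2), del (aIdx M) M) := by
  obtain ⟨π, hπF, hπP⟩ := hE
  obtain ⟨A, B, hABL, hABF, hAv, hBv, haeL, -⟩ := aIdx_spec hdL
  obtain ⟨A₂, B₂, hABM, hABMF, hA₂v, hB₂v, haeM, -⟩ := aIdx_spec hdM
  set a := aIdx L with haL
  set a₂ := aIdx M with haM
  have ha : a + 2 ≤ n := by have := B.isLt; omega
  have ha₂ : a₂ + 2 ≤ n := by have := B₂.isLt; omega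
  have hPF : PairIn (Fn n) (π A) (π B) := (hπF A B).mp (Or.inl hABF)
  have hPM : PairIn M (π A) (π B) := (hπP A B).mp (Or.inl hABL)
  rw [pairIn_Fn_iff] at hPF
  have key : ∃ (a' : ℕ) (A' B' : Fin n), a' % 2 = 0 ∧ A'.val = a' ∧ B'.val = a' + 1 ∧
      (A', B') ∈ M ∧ a' + 2 ≤ n ∧ ((π A = A' ∧ π B = B') ∨ (π A = B' ∧ π B = A')) := by
    rcases hPF with ⟨hu, hv⟩ | ⟨hv, hu⟩
    · refine ⟨(π A).val, π A, π B, hu, rfl, hv, ?_, by have := (π B).isLt; omega,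
        Or.inl ⟨rfl, rfl⟩⟩
      rcases hPM with hm | hm
      · exact hm
      · have hlt : (π B).val < (π A).val := Fin.lt_def.mp (hM.1 _ hm)
        omega
    · refine ⟨(π B).val, π B, π A, hv, rfl, hu, ?_, by have := (π A).isLt; omega,
        Or.inr ⟨rfl, rfl⟩⟩
      rcases hPM with hm | hm
      · have hlt : (π A).val < (π B).val := Fin.lt_def.mp (hM.1 _ hm)
        omega
      · exact hm
  obtain ⟨a', A', B', he', hA'v, hB'v, hA'B'M, ha', hor⟩ := key
  have hvals : (π A).val = a' ∧ (π B).val = a' + 1 ∨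
      (π A).val = a' + 1 ∧ (π B).val = a' := by
    rcases hor with ⟨e1, e2⟩ | ⟨e1, e2⟩
    · exact Or.inl ⟨by rw [e1, hA'v], by rw [e2, hB'v]⟩
    · exact Or.inr ⟨by rw [e1, hB'v], by rw [e2, hA'v]⟩
  set bs := blockSwapFun (n := n) a' a₂ ha' ha₂ with hbs
  have hinvol := blockSwapFun_invol a' a₂ ha' ha₂ he' haeM
  set τ : Equiv.Perm (Fin n) := hinvol.toPerm with hτ
  have hτ_app : ∀ v, τ v = bs v := fun v => rfl
  have hτ_symm : ∀ v, τ.symm v = bs v := fun v => rfl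
  set ρ : Equiv.Perm (Fin n) := π.trans τ with hρdef
  have hρ_app : ∀ v, ρ v = bs (π v) := fun v => rfl
  have hρ_symm : ∀ v, ρ.symm v = π.symm (bs v) := fun v => rfl
  have hπAB_ne : ∀ v : Fin n, v.val ≠ a → v.val ≠ a + 1 →
      (π v).val ≠ a' ∧ (π v).val ≠ a' + 1 := by
    intro v h1 h2
    constructor
    · intro hc
      rcases hvals with ⟨e1, e2⟩ | ⟨e1, e2⟩
      · exact h1 (by rw [← hAv]; exact congrArg Fin.val (π.injective (Fin.ext (by omega))))
      · exact h2 (by rw [← hBv]; exact congrArg Fin.val (π.injective (Fin.ext (by omega))))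
    · intro hc
      rcases hvals with ⟨e1, e2⟩ | ⟨e1, e2⟩
      · exact h2 (by rw [← hBv]; exact congrArg Fin.val (π.injective (Fin.ext (by omega))))
      · exact h1 (by rw [← hAv]; exact congrArg Fin.val (π.injective (Fin.ext (by omega))))
  have hρ : ∀ j : Fin n, j.val ≠ a → j.val ≠ a + 1 →
      (ρ j).val ≠ a₂ ∧ (ρ j).val ≠ a₂ + 1 := by
    intro j h1 h2
    have := hπAB_ne j h1 h2
    rw [hρ_app]
    exact blockSwap_avoid ha' ha₂ he' haeM _ this.1 this.2
  have hρ' : ∀ j : Fin n, j.val ≠ a₂ → j.val ≠ a₂ + 1 →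
      (ρ.symm j).val ≠ a ∧ (ρ.symm j).val ≠ a + 1 := by
    intro j h1 h2
    have hbj := blockSwap_avoid' ha' ha₂ he' haeM j h1 h2
    rw [← hbs] at hbj
    rw [hρ_symm]
    constructor
    · intro hc
      have : π.symm (bs j) = A := Fin.ext (by omega)
      have : bs j = π A := by rw [← this, Equiv.apply_symm_apply]
      have hv := congrArg Fin.val this
      rcases hvals with ⟨e1, -⟩ | ⟨e1, -⟩
      · exact hbj.1 (by omega)
      · exact hbj.2 (by omega)
    · intro hc
      have : π.symm (bs j) = B := Fin.ext (by omega)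
      have : bs j = π B := by rw [← this, Equiv.apply_symm_apply]
      have hv := congrArg Fin.val this
      rcases hvals with ⟨-, e2⟩ | ⟨-, e2⟩
      · exact hbj.2 (by omega)
      · exact hbj.1 (by omega)
  refine ⟨descendPerm a a₂ ha ha₂ hn ρ hρ hρ', fun i j => ?_, fun i j => ?_⟩
  · rw [pairIn_Fn_emb haeL ha, pairIn_Fn_emb haeM ha₂, descendPerm_emb, descendPerm_emb,
      hρ_app, hρ_app]
    rw [hπF]
    exact blockSwap_Fn ha' ha₂ he' haeM _ _
  · rw [pairIn_del, pairIn_del, descendPerm_emb, descendPerm_emb, hρ_app, hρ_app]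
    rw [hπP]
    exact blockSwap_pairs hM ha' ha₂ he' haeM hA'v hB'v hA₂v hB₂v hA'B'M hABM _ _


lemma pairIn_psi {hn : 3 ≤ n} {L' : Finset (Fin (n-2) × Fin (n-2))} {u v : Fin n} :
    PairIn (psi hn L') u v ↔
      ((u.val = 0 ∧ v.val = 1) ∨ (u.val = 1 ∧ v.val = 0) ∨
        (2 ≤ u.val ∧ 2 ≤ v.val ∧
          PairIn L' (unemb 0 (by omega) hn u) (unemb 0 (by omega) hn v))) := by
  unfold PairIn
  rw [mem_psi, mem_psi]
  constructor
  · rintro ((⟨h1, h2⟩ | ⟨h1, h2, h3⟩) | (⟨h1, h2⟩ | ⟨h1, h2, h3⟩))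
    · exact Or.inl ⟨h1, h2⟩
    · exact Or.inr (Or.inr ⟨h1, h2, Or.inl h3⟩)
    · exact Or.inr (Or.inl ⟨h2, h1⟩)
    · exact Or.inr (Or.inr ⟨h2, h1, Or.inr h3⟩)
  · rintro (⟨h1, h2⟩ | ⟨h1, h2⟩ | ⟨h1, h2, h3 | h3⟩)
    · exact Or.inl (Or.inl ⟨h1, h2⟩)
    · exact Or.inr (Or.inl ⟨h2, h1⟩)
    · exact Or.inl (Or.inr ⟨h1, h2, h3⟩)
    · exact Or.inr (Or.inr ⟨h2, h1, h3⟩)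

lemma pairIn_psi_ge {hn : 3 ≤ n} {L' : Finset (Fin (n-2) × Fin (n-2))} {u v : Fin n}
    (hu : 2 ≤ u.val) (hv : 2 ≤ v.val) :
    PairIn (psi hn L') u v ↔ PairIn L' (unemb 0 (by omega) hn u) (unemb 0 (by omega) hn v) := by
  rw [pairIn_psi]
  constructor
  · rintro (⟨h1, h2⟩ | ⟨h1, h2⟩ | ⟨h1, h2, h3⟩)
    · omega
    · omega
    · exact h3
  · intro h
    exact Or.inr (Or.inr ⟨hu, hv, h⟩)

lemma G_welldef (hn : 3 ≤ n) {L' M' : Finset (Fin (n-2) × Fin (n-2))}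
    (hE : NetEquiv2 (Fn (n-2), L') (Fn (n-2), M')) :
    NetEquiv2 (Fn n, psi hn L') (Fn n, psi hn M') := by
  obtain ⟨π', h1, h2⟩ := hE
  have hemb2 : ∀ w : Fin (n-2), 2 ≤ (emb 0 (n := n) w).val := by
    intro w
    rw [emb0_val]
    omega
  refine ⟨ascendPerm hn π', fun i j => ?_, fun i j => ?_⟩
  · by_cases hi : i.val < 2 <;> by_cases hj : j.val < 2
    · rw [ascendPerm_lt hi, ascendPerm_lt hj]
    · rw [ascendPerm_lt hi, ascendPerm_ge hj]
      have hval := hemb2 (π' (unemb 0 (by omega) hn j))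
      constructor <;> intro hp <;> exfalso <;> rw [pairIn_Fn_iff] at hp <;> omega
    · rw [ascendPerm_ge hi, ascendPerm_lt hj]
      have hval := hemb2 (π' (unemb 0 (by omega) hn i))
      constructor <;> intro hp <;> exfalso <;> rw [pairIn_Fn_iff] at hp <;> omega
    · rw [ascendPerm_ge hi, ascendPerm_ge hj]
      have hL := pairIn_Fn_emb (n := n) (a := 0) (by omega) (by omega)
        (i := unemb 0 (by omega) hn i) (j := unemb 0 (by omega) hn j)
      rw [emb_unemb (by omega) hn i (by omega) (by omega),
        emb_unemb (by omega) hn j (by omega) (by omega)] at hL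
      rw [← hL, h1]
      exact pairIn_Fn_emb (by omega) (by omega)
  · by_cases hi : i.val < 2 <;> by_cases hj : j.val < 2
    · rw [ascendPerm_lt hi, ascendPerm_lt hj, pairIn_psi, pairIn_psi]
      constructor <;> rintro (h | h | ⟨h3a, h3b, h3c⟩) <;>
        first
          | exact Or.inl h
          | exact Or.inr (Or.inl h)
          | omega
    · rw [ascendPerm_lt hi, ascendPerm_ge hj]
      have hval := hemb2 (π' (unemb 0 (by omega) hn j))
      constructor <;> intro hp <;> exfalso <;> rw [pairIn_psi] at hp <;>
        rcases hp with ⟨e1, e2⟩ | ⟨e1, e2⟩ | ⟨e1, e2, e3⟩ <;> omega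
    · rw [ascendPerm_ge hi, ascendPerm_lt hj]
      have hval := hemb2 (π' (unemb 0 (by omega) hn i))
      constructor <;> intro hp <;> exfalso <;> rw [pairIn_psi] at hp <;>
        rcases hp with ⟨e1, e2⟩ | ⟨e1, e2⟩ | ⟨e1, e2, e3⟩ <;> omega
    · rw [ascendPerm_ge hi, ascendPerm_ge hj]
      rw [pairIn_psi_ge (by omega) (by omega), pairIn_psi_ge (hemb2 _) (hemb2 _)]
      rw [unemb_emb, unemb_emb]
      exact h2 _ _


lemma redundant_iff_dup {L : Finset (Fin n × Fin n)} (hL : IsLayer L) :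
    Redundant [Fn n, L] ↔ ∃ c ∈ L, c ∈ Fn n := by
  constructor
  · intro hr
    by_contra hno
    push_neg at hno
    exact nonredundant_of_nodup hL hno hr
  · rintro ⟨⟨A, B⟩, hcL, hcF⟩
    exact redundant_of_dup hL hcL hcF

lemma psi_dup (hn : 3 ≤ n) (L' : Finset (Fin (n-2) × Fin (n-2))) :
    ∃ c ∈ psi hn L', c ∈ Fn n := by
  refine ⟨(⟨0, by omega⟩, ⟨1, by omega⟩), Finset.mem_insert_self _ _, mem_Fn.mpr ⟨rfl, rfl⟩⟩

lemma psi_redundant (hn : 3 ≤ n) {L' : Finset (Fin (n-2) × Fin (n-2))} (hL' : IsLayer L') :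
    Redundant [Fn n, psi hn L'] := by
  rw [redundant_iff_dup (isLayer_psi hL')]
  exact psi_dup hn L'

lemma aIdx_psi (hn : 3 ≤ n) (L' : Finset (Fin (n-2) × Fin (n-2))) :
    aIdx (psi hn L') = 0 := by
  obtain ⟨A, B, hABL, hABF, hAv, hBv, hae, hmin⟩ := aIdx_spec (psi_dup hn L')
  have := hmin (⟨0, by omega⟩, ⟨1, by omega⟩) (Finset.mem_insert_self _ _)
    (mem_Fn.mpr ⟨rfl, rfl⟩)
  have h0 : ((⟨0, by omega⟩ : Fin n), (⟨1, by omega⟩ : Fin n)).1.val = 0 := rfl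
  omega

end S8

open S8 in
theorem statement8' (n : ℕ) (hn : 3 ≤ n) :
    Nat.card (Quot (fun (A B : {L : Finset (Fin n × Fin n) //
        IsLayer L ∧ Redundant [Fn n, L]}) =>
      NetEquiv2 (Fn n, A.1) (Fn n, B.1))) =
    Nat.card (Quot (fun (A B : {L : Finset (Fin (n - 2) × Fin (n - 2)) // IsLayer L}) =>
      NetEquiv2 (Fn (n - 2), A.1) (Fn (n - 2), B.1))) := by
  apply Nat.card_congr
  refine ⟨Quot.lift (fun A => Quot.mk _
      (⟨del (aIdx A.1) A.1, isLayer_del A.2.1⟩ :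
        {L : Finset (Fin (n - 2) × Fin (n - 2)) // IsLayer L})) ?_,
    Quot.lift (fun B => Quot.mk _
      (⟨psi hn B.1, isLayer_psi B.2, psi_redundant hn B.2⟩ :
        {L : Finset (Fin n × Fin n) // IsLayer L ∧ Redundant [Fn n, L]})) ?_, ?_, ?_⟩
  · intro A B hAB
    apply Quot.sound
    exact F_welldef hn A.2.1 B.2.1 ((redundant_iff_dup A.2.1).mp A.2.2)
      ((redundant_iff_dup B.2.1).mp B.2.2) hAB
  · intro A B hAB
    apply Quot.sound
    exact G_welldef hn hAB
  · intro q
    induction q using Quot.ind with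
    | _ a =>
      apply Quot.sound
      exact netEquiv_psi_del hn a.2.1 ((redundant_iff_dup a.2.1).mp a.2.2)
  · intro q
    induction q using Quot.ind with
    | _ b =>
      exact congrArg (Quot.mk _) (Subtype.ext (by
        show del (aIdx (psi hn b.1)) (psi hn b.1) = b.1
        rw [aIdx_psi, del0_psi]))



/-- Theorem 4(1) of the paper.
For `n ≥ 3`, the number of `≈`-equivalence classes of redundant two-layer networks on `n`
channels with first layer `F_n` equals `|R(G_{n-2})|`, the number of `≈`-equivalence
classes of all two-layer networks on `n-2` channels with first layer `F_{n-2}`. -/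
theorem statement8 (n : ℕ) (hn : 3 ≤ n) :
    Nat.card (Quot (fun (A B : {L : Finset (Fin n × Fin n) //
        IsLayer L ∧ Redundant [Fn n, L]}) =>
      NetEquiv2 (Fn n, A.1) (Fn n, B.1))) =
    Nat.card (Quot (fun (A B : {L : Finset (Fin (n - 2) × Fin (n - 2)) // IsLayer L}) =>
      NetEquiv2 (Fn (n - 2), A.1) (Fn (n - 2), B.1))) := by
  exact statement8' n hn
end
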